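/- arXiv:1309.6664 — 9 statements merged into one kernel-verified Lean document; each statement's English description precedes it below -/
import Mathlib

section
/- Descartes's rule of signs (negative part): for every nonzero real polynomial P, the number of negative real roots of P, counted with multiplicity, is at most the number of sign permanences of P, i.e. z⁻(P) ≤ c(P). -/
open Polynomial

/-- Number of sign changes in a list of reals, after discarding zero entries:
the number of consecutive pairs with negative product. -/
noncomputable def signChanges (l : List ℝ) : ℕ :=
  let l' := l.filter (fun x => decide (x ≠ 0))
  (l'.zip l'.tail).countP (fun p => decide (p.1 * p.2 < 0))

/-- `v(P)`: number of sign changes in the sequence of nonzero coefficients of `P`,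
listed in order of increasing degree. -/
noncomputable def v (P : Polynomial ℝ) : ℕ :=
  signChanges (List.ofFn fun i : Fin (P.natDegree + 1) => P.coeff i)

/-- `c(P) := v(P(-X))`: the number of sign permanences of `P` (minimization convention). -/
noncomputable def c (P : Polynomial ℝ) : ℕ :=
  v (P.comp (-Polynomial.X))

/-- `z⁺(P)`: number of positive real roots of `P`, with multiplicity. -/
noncomputable def zpos (P : Polynomial ℝ) : ℕ :=
  (P.roots.filter (fun x => 0 < x)).card

/-- `z⁻(P)`: number of negative real roots of `P`, with multiplicity. -/
noncomputable def zneg (P : Polynomial ℝ) : ℕ :=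
  (P.roots.filter (fun x => x < 0)).card

/-! Substituting `-X` turns the negative roots of `P` into the positive roots of `P(-X)`, so the
claim is Descartes's rule for positive roots, `Polynomial.roots_countP_pos_le_signVariations`,
applied to `P(-X)`. It remains to identify `v` with `Polynomial.signVariations`, which reads the
coefficients from the leading one down and counts the sign changes as one less than the length of
the destuttered list of nonzero signs. -/

namespace List

variable {α β : Type*}

theorem zipWith_dropLast_tail (f : α → α → β) :
    ∀ l : List α, zipWith f l.dropLast l.tail = zipWith f l l.tail
  | [] | [_] => rfl
  | _ :: b :: t => by
    simpa using zipWith_dropLast_tail f (b :: t)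

theorem zipWith_reverse_tail (f : α → α → β) (l : List α) :
    zipWith f l.reverse l.reverse.tail = (zipWith (fun a b => f b a) l l.tail).reverse := by
  rw [← zipWith_dropLast_tail, ← zipWith_dropLast_tail _ l, reverse_zipWith (by simp),
    tail_reverse, dropLast_reverse, zipWith_comm]

end List

theorem signChanges_reverse (l : List ℝ) : signChanges l.reverse = signChanges l := by
  simp only [signChanges, List.filter_reverse, List.zip_eq_zipWith, List.zipWith_reverse_tail,
    List.countP_reverse]
  rw [← List.map_uncurry_zip_eq_zipWith, List.countP_map, ← List.zip_eq_zipWith]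
  exact List.countP_congr fun q _ => by simp [Function.uncurry, mul_comm]

theorem sign_ne_sign_iff_mul_neg {a b : ℝ} (ha : a ≠ 0) (hb : b ≠ 0) :
    SignType.sign a ≠ SignType.sign b ↔ a * b < 0 := by
  rcases ha.lt_or_gt with ha | ha <;> rcases hb.lt_or_gt with hb | hb <;>
    simp [sign_neg, sign_pos, ha, hb, mul_neg_iff, ha.not_gt, hb.not_gt]

theorem countP_zip_tail_mul_neg_eq_length_destutter :
    ∀ {m : List ℝ}, (∀ x ∈ m, x ≠ 0) →
      (m.zip m.tail).countP (fun p => decide (p.1 * p.2 < 0)) =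
        ((m.map SignType.sign).destutter (· ≠ ·)).length - 1
  | [], _ | [_], _ => rfl
  | a :: b :: t, hm => by
    have ih := countP_zip_tail_mul_neg_eq_length_destutter (m := b :: t)
      fun x hx => hm x (List.mem_cons_of_mem a hx)
    have hpos : 0 < (((b :: t).map SignType.sign).destutter (· ≠ ·)).length := by
      simp [List.length_pos_iff]
    simp only [List.tail_cons, List.map_cons, List.destutter_cons'] at ih hpos
    rw [List.map_cons, List.map_cons, List.destutter_cons_cons, List.tail_cons,
      List.zip_cons_cons, List.countP_cons, ih]
    by_cases hab : a * b < 0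
    · have hs := (sign_ne_sign_iff_mul_neg (hm a (by simp)) (hm b (by simp))).2 hab
      simp only [hab, decide_true, if_true, if_pos hs, List.length_cons]
      omega
    · have hs : SignType.sign a = SignType.sign b := by
        by_contra hs
        exact hab ((sign_ne_sign_iff_mul_neg (hm a (by simp)) (hm b (by simp))).1 hs)
      simp [hab, hs]

theorem signChanges_eq_length_destutter (l : List ℝ) :
    signChanges l = (((l.map SignType.sign).filter (· ≠ 0)).destutter (· ≠ ·)).length - 1 := by
  rw [List.filter_map]
  simp only [Function.comp_def, ne_eq, sign_eq_zero_iff]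
  exact countP_zip_tail_mul_neg_eq_length_destutter fun x hx => by
    simpa using List.of_mem_filter hx

theorem Polynomial.signVariations_eq_signChanges (P : ℝ[X]) :
    P.signVariations = signChanges P.coeffList :=
  (signChanges_eq_length_destutter _).symm

theorem Polynomial.coeffList_eq_reverse_ofFn {P : ℝ[X]} (hP : P ≠ 0) :
    P.coeffList = (List.ofFn fun i : Fin (P.natDegree + 1) => P.coeff i).reverse := by
  rw [coeffList, withBotSucc_degree_eq_natDegree_add_one hP, List.ofFn_eq_map,
    ← List.map_coe_finRange_eq_range, List.map_reverse, List.map_map]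
  rfl

theorem v_eq_signVariations (P : ℝ[X]) : v P = P.signVariations := by
  rcases eq_or_ne P 0 with rfl | hP
  · simp [v, signChanges]
  · rw [signVariations_eq_signChanges, coeffList_eq_reverse_ofFn hP, signChanges_reverse, v]

theorem zneg_eq_countP_roots_comp_neg_X (P : ℝ[X]) :
    zneg P = (P.comp (-X)).roots.countP (0 < ·) := by
  simp [zneg, roots_comp_neg_X, Multiset.countP_map]

theorem descartes_rule_of_signs_neg_general (P : Polynomial ℝ) :
    zneg P ≤ c P := by
  rw [zneg_eq_countP_roots_comp_neg_X, c, v_eq_signVariations]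
  exact roots_countP_pos_le_signVariations _

/-- Descartes's rule of signs (negative part): `z⁻(P) ≤ c(P)`. -/
theorem descartes_rule_of_signs_neg (P : Polynomial ℝ) (hP : P ≠ 0) :
    zneg P ≤ c P :=
  descartes_rule_of_signs_neg_general P
end

section
/- Exactness of Descartes's rule for real-rooted polynomials: if a nonzero real polynomial P splits over ℝ (all its complex roots are real), then the number of positive real roots of P counted with multiplicity equals v(P), and the number of negative real roots counted with multiplicity equals c(P); that is, z⁺(P) = v(P) and z⁻(P) = c(P). -/
open Polynomial

/-
By Descartes' rule of signs, `z⁺(P) ≤ v(P)`, and applied to `P(-X)` it gives `z⁻(P) ≤ c(P)`.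
Conversely, two consecutive nonzero coefficients of `P`, in degrees `i < j`, contribute at most
`j - i` sign changes to `P` and `P(-X)` together: at most one each, and not both when `j = i + 1`,
since then exactly one of the two coefficients changes sign under `X ↦ -X`. Hence
`v(P) + c(P) ≤ deg P - ord₀ P`. For a split `P` the roots give `z⁺ + z⁻ + ord₀ P = deg P`, so both
inequalities are equalities.
-/

namespace List

variable {α : Type*}

theorem zip_dropLast_tail (l : List α) : l.dropLast.zip l.tail = l.zip l.tail := by
  rcases eq_or_ne l [] with rfl | hl
  · rfl
  have h := zip_append (l₁ := l.dropLast) (r₁ := [l.getLast hl]) (l₂ := l.tail) (r₂ := [])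
    (by simp)
  rwa [dropLast_append_getLast, append_nil, zip_nil_right, append_nil, eq_comm] at h

theorem countP_zip_tail_reverse (r : α → α → Prop) [DecidableRel r] [Std.Symm r] (l : List α) :
    (l.reverse.zip l.reverse.tail).countP (fun p => r p.1 p.2) =
      (l.zip l.tail).countP (fun p => r p.1 p.2) := by
  have hswap : l.reverse.zip l.reverse.tail = ((l.zip l.tail).map Prod.swap).reverse := by
    rw [← zip_dropLast_tail, ← zip_dropLast_tail l, zip_swap, dropLast_reverse, tail_reverse,
      zip_eq_zipWith, zip_eq_zipWith, reverse_zipWith (by simp)]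
  rw [hswap, countP_reverse, countP_map]
  exact countP_congr fun p _ => by simp [comm_of r]

theorem length_destutter'_ne [DecidableEq α] (a : α) (l : List α) :
    (l.destutter' (· ≠ ·) a).length = ((a :: l).zip l).countP (fun p => p.1 ≠ p.2) + 1 := by
  induction l generalizing a with
  | nil => rfl
  | cons b l ih =>
    by_cases hab : a = b
    · subst hab; simp [destutter'_cons_neg, ih]
    · simp [destutter'_cons_pos l (R := (· ≠ ·)) hab, ih, hab]

theorem length_destutter_ne_sub_one [DecidableEq α] (l : List α) :
    (l.destutter (· ≠ ·)).length - 1 = (l.zip l.tail).countP (fun p => p.1 ≠ p.2) := by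
  cases l with
  | nil => rfl
  | cons a l => simp [destutter_cons', length_destutter'_ne]

end List

theorem mul_neg_iff_sign_ne {R : Type*} [Ring R] [LinearOrder R] [IsStrictOrderedRing R]
    {x y : R} (hx : x ≠ 0) (hy : y ≠ 0) : x * y < 0 ↔ SignType.sign x ≠ SignType.sign y := by
  rcases hx.lt_or_gt with hx | hx <;> rcases hy.lt_or_gt with hy | hy <;>
    simp [hx, hy, hx.le, hy.le, mul_neg_iff, sign_neg, sign_pos]

namespace Polynomial

section Semiring

variable {R : Type*} [Semiring R] {P : R[X]}

theorem coeffList_eq_reverse_ofFn_s2 (hP : P ≠ 0) :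
    P.coeffList = (List.ofFn fun i : Fin (P.natDegree + 1) => P.coeff i).reverse := by
  rw [coeffList, withBotSucc_degree_eq_natDegree_add_one hP, List.map_reverse]
  congr 1
  apply List.ext_getElem <;> simp [-List.ofFn_succ]

theorem natTrailingDegree_eraseLead (h : P.eraseLead ≠ 0) :
    P.eraseLead.natTrailingDegree = P.natTrailingDegree := by
  have hP : P ≠ 0 := fun hP => h (by rw [hP, eraseLead_zero])
  obtain ⟨i, hi⟩ := Finset.nonempty_of_ne_empty (support_eq_empty.not.mpr h)
  have hin : i < P.natDegree := lt_natDegree_of_mem_eraseLead_support hi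
  have hcoeff : ∀ j < P.natDegree, P.eraseLead.coeff j = P.coeff j :=
    fun j hj => eraseLead_coeff_of_ne j hj.ne
  have htrail : P.natTrailingDegree < P.natDegree :=
    (natTrailingDegree_le_of_ne_zero (by rwa [← hcoeff i hin, ← mem_support_iff])).trans_lt hin
  refine le_antisymm (natTrailingDegree_le_of_ne_zero ?_) (le_natTrailingDegree h fun j hj => ?_)
  · rw [hcoeff _ htrail]
    exact mt trailingCoeff_eq_zero.mp hP
  · rw [hcoeff _ (hj.trans htrail)]
    exact coeff_eq_zero_of_lt_natTrailingDegree hj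

theorem natTrailingDegree_eq_natDegree_of_eraseLead_eq_zero (h : P.eraseLead = 0) :
    P.natTrailingDegree = P.natDegree := by
  rcases eq_or_ne P 0 with rfl | hP
  · simp
  conv_lhs => rw [← P.eraseLead_add_monomial_natDegree_leadingCoeff, h, zero_add]
  exact natTrailingDegree_monomial (leadingCoeff_ne_zero.mpr hP)

variable [LinearOrder R]

theorem signVariations_eq_zero_of_eraseLead_eq_zero (h : P.eraseLead = 0) :
    P.signVariations = 0 := by
  rw [← P.eraseLead_add_monomial_natDegree_leadingCoeff, h, zero_add, signVariations_monomial]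

end Semiring

section Ring

variable {R : Type*} [Ring R]

theorem natDegree_comp_neg_X (P : R[X]) : (P.comp (-X)).natDegree = P.natDegree :=
  natDegree_eq_natDegree degree_comp_neg_X

theorem eraseLead_comp_neg_X (P : R[X]) : (P.comp (-X)).eraseLead = P.eraseLead.comp (-X) := by
  rw [← self_sub_C_mul_X_pow (P.comp (-X)), ← self_sub_C_mul_X_pow P, natDegree_comp_neg_X,
    comp_neg_X_leadingCoeff_eq, sub_comp]
  simp [neg_pow (X : R[X]), mul_assoc, ((Commute.neg_one_left _).pow_left _).eq]

end Ring

section OrderedRing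

variable {R : Type*} [Ring R] [LinearOrder R] [IsStrictOrderedRing R]

theorem ite_sign_add_ite_sign_neg_one_pow_le {a b : R} (ha : a ≠ 0) {d n : ℕ} (hdn : d < n) :
    ((if SignType.sign a = -SignType.sign b then 1 else 0) +
      if SignType.sign ((-1) ^ n * a) = -SignType.sign ((-1) ^ d * b) then 1 else 0) ≤ n - d := by
  obtain ⟨k, rfl⟩ := Nat.exists_eq_add_of_lt hdn
  cases k with
  | succ k => split_ifs <;> omega
  | zero =>
    -- for `n = d + 1` the two conditions read `sign a = -sign b` and `sign a = sign b`
    have hsa : SignType.sign a ≠ 0 := sign_ne_zero.mpr ha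
    rcases neg_one_pow_eq_or R d with h | h <;>
      simp only [pow_succ, h, add_zero, Nat.add_sub_cancel_left, sign_mul, sign_one] <;>
      generalize SignType.sign a = s at * <;> generalize SignType.sign b = t <;>
      cases s <;> cases t <;> simp_all

theorem signVariations_add_signVariations_comp_neg_X_add_natTrailingDegree_le (P : R[X]) :
    P.signVariations + (P.comp (-X)).signVariations + P.natTrailingDegree ≤ P.natDegree := by
  induction hn : P.natDegree using Nat.strong_induction_on generalizing P with
  | _ n ih =>
  by_cases hQ : P.eraseLead = 0
  · rw [signVariations_eq_zero_of_eraseLead_eq_zero hQ,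
      signVariations_eq_zero_of_eraseLead_eq_zero (by rw [eraseLead_comp_neg_X, hQ, zero_comp]),
      natTrailingDegree_eq_natDegree_of_eraseLead_eq_zero hQ, hn, zero_add, zero_add]
  have hP : P ≠ 0 := fun hP => hQ (by rw [hP, eraseLead_zero])
  have hd : P.eraseLead.natDegree < n :=
    hn ▸ (P.eraseLead_natDegree_lt_or_eraseLead_eq_zero).resolve_right hQ
  have hstep := ite_sign_add_ite_sign_neg_one_pow_le (b := P.eraseLead.leadingCoeff)
    (leadingCoeff_ne_zero.mpr hP) hd
  have hrec := ih _ hd P.eraseLead rfl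
  rw [natTrailingDegree_eraseLead hQ] at hrec
  rw [signVariations_eq_eraseLead_add_ite hP,
    signVariations_eq_eraseLead_add_ite (comp_neg_X_eq_zero_iff.not.mpr hP), eraseLead_comp_neg_X,
    comp_neg_X_leadingCoeff_eq, comp_neg_X_leadingCoeff_eq, hn]
  omega

end OrderedRing

section CommRing

variable {R : Type*} [CommRing R] [LinearOrder R] [IsStrictOrderedRing R] (P : R[X])

theorem roots_countP_neg_le_signVariations_comp_neg_X :
    P.roots.countP (· < 0) ≤ (P.comp (-X)).signVariations := by
  have h := roots_countP_pos_le_signVariations (P.comp (-X))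
  rw [roots_comp_neg_X, Multiset.countP_map, ← Multiset.countP_eq_card_filter] at h
  simpa only [Left.neg_pos_iff] using h

theorem Splits.roots_countP_pos_add_roots_countP_neg_add_natTrailingDegree (hP : P.Splits) :
    P.roots.countP (0 < ·) + P.roots.countP (· < 0) + P.natTrailingDegree = P.natDegree := by
  classical
  have hnonpos := Multiset.card_eq_countP_add_countP (· < 0) (P.roots.filter (¬ 0 < ·))
  rw [Multiset.countP_filter, Multiset.countP_filter, ← Multiset.countP_eq_card_filter] at hnonpos
  have hneg : P.roots.countP (fun x => x < 0 ∧ ¬0 < x) = P.roots.countP (· < 0) :=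
    Multiset.countP_congr rfl fun x _ => propext (and_iff_left_of_imp lt_asymm)
  have hzero : P.roots.countP (fun x => ¬x < 0 ∧ ¬0 < x) = P.natTrailingDegree := by
    rw [← rootMultiplicity_eq_natTrailingDegree', ← count_roots, Multiset.count]
    exact Multiset.countP_congr rfl fun x _ => propext (by grind)
  rw [← splits_iff_card_roots.mp hP, Multiset.card_eq_countP_add_countP (0 < ·), hnonpos, hneg,
    hzero, add_assoc]

end CommRing

end Polynomial

theorem descartes_exact_of_splits_general (P : Polynomial ℝ)
    (hsplits : (P.map (RingHom.id ℝ)).Splits) :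
    zpos P = v P ∧ zneg P = c P := by
  rw [Polynomial.map_id] at hsplits
  have hpos := roots_countP_pos_le_signVariations P
  have hneg := roots_countP_neg_le_signVariations_comp_neg_X P
  have hsigns := signVariations_add_signVariations_comp_neg_X_add_natTrailingDegree_le P
  have hroots := hsplits.roots_countP_pos_add_roots_countP_neg_add_natTrailingDegree
  rw [zpos, zneg, c, v_eq_signVariations, v_eq_signVariations, ← Multiset.countP_eq_card_filter,
    ← Multiset.countP_eq_card_filter]
  omega

/-- Exactness of Descartes's rule for real-rooted polynomials: if all the complex roots
of `P` are real (i.e. `P` splits over `ℝ`), then `z⁺(P) = v(P)` and `z⁻(P) = c(P)`. -/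
theorem descartes_exact_of_splits (P : Polynomial ℝ) (hP : P ≠ 0)
    (hsplits : (P.map (RingHom.id ℝ)).Splits) :
    zpos P = v P ∧ zneg P = c P :=
  descartes_exact_of_splits_general P hsplits
end

section
/- For every nonzero real polynomial P, the sum of the number of sign alternations and the number of sign permanences satisfies v(P) + c(P) ≤ deg(P) − z⁰(P), where deg(P) is the degree of P and z⁰(P) is the multiplicity of 0 as a root of P. -/
open Polynomial

lemma sc_cons_zero (l : List ℝ) : signChanges (0 :: l) = signChanges l := by
  simp [signChanges]

lemma sc_mid_zero (x : ℝ) (l : List ℝ) : signChanges (x :: 0 :: l) = signChanges (x :: l) := by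
  by_cases hx : x = 0 <;> simp [signChanges, List.filter_cons, hx]

lemma sc_neg (l : List ℝ) : signChanges (l.map (fun x => -x)) = signChanges l := by
  have h0 : ((fun x => decide (x ≠ 0)) ∘ fun x : ℝ => -x) = fun x : ℝ => decide (x ≠ 0) := by
    funext x; simp
  have h1 : (l.map (fun x : ℝ => -x)).filter (fun x => decide (x ≠ 0))
      = (l.filter (fun x => decide (x ≠ 0))).map (fun x => -x) := by
    rw [List.filter_map, h0]
  simp only [signChanges, h1]
  rw [← List.map_tail, List.zip_map, List.countP_map]
  congr 1
  funext p
  simp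

lemma sc_cons_cons (x y : ℝ) (hx : x ≠ 0) (hy : y ≠ 0) (r : List ℝ) :
    signChanges (x :: y :: r) = (if x * y < 0 then 1 else 0) + signChanges (y :: r) := by
  by_cases h : x * y < 0 <;>
    simp [signChanges, List.filter_cons, hx, hy, List.zip_cons_cons, List.countP_cons, h,
      Nat.add_comm] <;> omega

/-- alternate signs: entry at index `i` is multiplied by `(-1)^i`. -/
def alt : List ℝ → List ℝ
  | [] => []
  | a :: t => a :: (alt t).map (fun x => -x)

lemma key : ∀ (n : ℕ) (l : List ℝ), l.length ≤ n → l ≠ [] → l.getLast? ≠ some 0 →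
    signChanges l + signChanges (alt l) + (l.takeWhile (fun x => decide (x = 0))).length + 1
      ≤ l.length := by
  intro n
  induction n with
  | zero =>
    intro l hl hne _
    simp only [Nat.le_zero, List.length_eq_zero_iff] at hl
    exact absurd hl hne
  | succ n ih =>
    intro l hlen hne hlast
    obtain _ | ⟨a, t⟩ := l
    · exact absurd rfl hne
    obtain _ | ⟨b, t⟩ := t
    · -- l = [a]
      have ha : a ≠ 0 := by simpa using hlast
      simp [signChanges, alt, ha]
    by_cases ha : a = 0
    · -- leading zero
      subst ha
      have h2 : signChanges (alt (0 :: b :: t)) = signChanges (alt (b :: t)) := by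
        show signChanges (0 :: (alt (b :: t)).map _) = _
        rw [sc_cons_zero, sc_neg]
      have h3 := ih (b :: t) (by simpa using hlen) (by simp)
        (by rwa [List.getLast?_cons_cons] at hlast)
      have h4 : ((0 :: b :: t).takeWhile (fun x : ℝ => decide (x = 0))).length
          = ((b :: t).takeWhile (fun x : ℝ => decide (x = 0))).length + 1 := by
        simp [List.takeWhile_cons]
      rw [sc_cons_zero, h2, h4]
      simp only [List.length_cons] at h3 ⊢
      omega
    · by_cases hb : b = 0
      · subst hb
        obtain _ | ⟨y, t⟩ := t
        · -- l = [a, 0] : last is 0, contradiction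
          simp [List.getLast?_cons_cons] at hlast
        by_cases hy : y = 0
        · -- l = a :: 0 :: 0 :: t  : reduce to a :: t
          subst hy
          have e1 : alt (a :: (0:ℝ) :: (0:ℝ) :: t) = a :: 0 :: 0 :: (alt t).map (fun x => -x) := by
            simp [alt, List.map_map, Function.comp_def]
          have hsc1 : signChanges (a :: (0:ℝ) :: (0:ℝ) :: t) = signChanges (a :: t) := by
            rw [sc_mid_zero, sc_mid_zero]
          have hsc2 : signChanges (alt (a :: (0:ℝ) :: (0:ℝ) :: t)) = signChanges (alt (a :: t)) := by
            rw [e1, sc_mid_zero, sc_mid_zero]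
            rfl
          have hlast' : (a :: t).getLast? ≠ some 0 := by
            obtain _ | ⟨z, t⟩ := t
            · simp [List.getLast?_cons_cons] at hlast
            · rw [List.getLast?_cons_cons]
              rwa [List.getLast?_cons_cons, List.getLast?_cons_cons,
                List.getLast?_cons_cons] at hlast
          have h3 := ih (a :: t) (by simp at hlen ⊢; omega) (by simp) hlast'
          have h4 : ((a :: (0:ℝ) :: (0:ℝ) :: t).takeWhile (fun x : ℝ => decide (x = 0))).length
              = 0 := by simp [List.takeWhile_cons, ha]
          have h5 : ((a :: t).takeWhile (fun x : ℝ => decide (x = 0))).length = 0 := by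
            simp [List.takeWhile_cons, ha]
          rw [hsc1, hsc2, h4]
          rw [h5] at h3
          simp only [List.length_cons] at h3 ⊢
          omega
        · -- l = a :: 0 :: y :: t with a ≠ 0, y ≠ 0
          have e1 : alt (a :: (0:ℝ) :: y :: t) = a :: 0 :: y :: (alt t).map (fun x => -x) := by
            simp [alt, List.map_map, Function.comp_def]
          have hsc1 : signChanges (a :: (0:ℝ) :: y :: t)
              = (if a * y < 0 then 1 else 0) + signChanges (y :: t) := by
            rw [sc_mid_zero, sc_cons_cons a y ha hy]
          have hsc2 : signChanges (alt (a :: (0:ℝ) :: y :: t))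
              = (if a * y < 0 then 1 else 0) + signChanges (alt (y :: t)) := by
            rw [e1, sc_mid_zero, sc_cons_cons a y ha hy]
            rfl
          have hlast' : (y :: t).getLast? ≠ some 0 := by
            rwa [List.getLast?_cons_cons, List.getLast?_cons_cons] at hlast
          have h3 := ih (y :: t) (by simp at hlen ⊢; omega) (by simp) hlast'
          have h4 : ((a :: (0:ℝ) :: y :: t).takeWhile (fun x : ℝ => decide (x = 0))).length
              = 0 := by simp [List.takeWhile_cons, ha]
          rw [hsc1, hsc2, h4]
          simp only [List.length_cons] at h3 ⊢
          by_cases hay : a * y < 0 <;> simp [hay] <;> omega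
      · -- l = a :: b :: t with a ≠ 0, b ≠ 0
        have e1 : alt (a :: b :: t) = a :: -b :: alt t := by
          simp [alt, List.map_map, Function.comp_def]
        have hsc1 : signChanges (a :: b :: t)
            = (if a * b < 0 then 1 else 0) + signChanges (b :: t) := sc_cons_cons a b ha hb t
        have hsc2 : signChanges (alt (a :: b :: t))
            = (if a * -b < 0 then 1 else 0) + signChanges (alt (b :: t)) := by
          rw [e1, sc_cons_cons a (-b) ha (by simpa using hb)]
          congr 1
          have : (-b) :: alt t = (b :: (alt t).map (fun x => -x)).map (fun x => -x) := by
            simp [List.map_map, Function.comp_def]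
          rw [this, sc_neg]
          rfl
        have hlast' : (b :: t).getLast? ≠ some 0 := by
          rwa [List.getLast?_cons_cons] at hlast
        have h3 := ih (b :: t) (by simpa using hlen) (by simp) hlast'
        have h4 : ((a :: b :: t).takeWhile (fun x : ℝ => decide (x = 0))).length = 0 := by
          simp [List.takeWhile_cons, ha]
        rw [hsc1, hsc2, h4]
        have hind : (if a * b < 0 then 1 else 0) + (if a * -b < 0 then 1 else 0) ≤ 1 := by
          by_cases h : a * b < 0
          · have h2 : ¬ (a * -b < 0) := by nlinarith
            simp [h, h2]
            linarith
          · simp only [h, if_false]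
            split <;> omega
        simp only [List.length_cons] at h3 ⊢
        omega

lemma alt_ofFn (n : ℕ) (f : ℕ → ℝ) :
    alt (List.ofFn fun i : Fin n => f i) = List.ofFn (fun i : Fin n => (-1) ^ (i : ℕ) * f i) := by
  induction n generalizing f with
  | zero => simp [alt]
  | succ n ih =>
    rw [List.ofFn_succ, List.ofFn_succ]
    simp only [alt, Fin.val_succ]
    rw [ih (fun k => f (k + 1)), List.map_ofFn]
    simp only [Fin.val_zero, pow_zero, one_mul]
    congr 1
    refine congrArg List.ofFn ?_
    funext i
    simp [pow_succ]
    try ring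

lemma coeff_comp_neg_X (P : ℝ[X]) (k : ℕ) :
    (P.comp (-X)).coeff k = (-1) ^ k * P.coeff k := by
  induction P using Polynomial.induction_on' with
  | add p q hp hq => simp [add_comp, coeff_add, hp, hq, mul_add]
  | monomial n a =>
    rw [monomial_comp]
    rw [show ((-X : ℝ[X]) ^ n) = (-1 : ℝ[X]) ^ n * X ^ n by rw [← neg_pow]]
    rw [show ((-1 : ℝ[X]) = C (-1)) by simp]
    rw [← C_pow, ← mul_assoc, ← C_mul, coeff_C_mul, coeff_X_pow, coeff_monomial]
    by_cases h : n = k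
    · subst h; simp [mul_comm]
    · simp [h, Ne.symm h]

lemma natDegree_comp_neg_X (P : ℝ[X]) : (P.comp (-X)).natDegree = P.natDegree := by
  rw [natDegree_comp]
  simp

lemma tw_ge : ∀ (m : ℕ) (l : List ℝ), (∀ k, k < m → l.getD k 1 = 0) →
    m ≤ (l.takeWhile (fun x => decide (x = 0))).length := by
  intro m
  induction m with
  | zero => intro l _; simp
  | succ m ih =>
    intro l h
    obtain _ | ⟨a, t⟩ := l
    · exact absurd (h 0 (Nat.succ_pos m)) (by norm_num)
    · have ha : a = 0 := h 0 (Nat.succ_pos m)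
      subst ha
      have : (List.takeWhile (fun x : ℝ => decide (x = 0)) (0 :: t))
          = 0 :: List.takeWhile (fun x : ℝ => decide (x = 0)) t := by
        simp [List.takeWhile_cons]
      rw [this]
      simp only [List.length_cons]
      have := ih t (fun k hk => by
        have := h (k + 1) (by omega)
        rwa [List.getD_cons_succ] at this)
      omega

lemma coeff_lt_rootMult (P : ℝ[X]) (k : ℕ) (hk : k < P.rootMultiplicity 0) :
    P.coeff k = 0 := by
  have hdvd : (X : ℝ[X]) ^ P.rootMultiplicity 0 ∣ P := by
    have := P.pow_rootMultiplicity_dvd 0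
    simpa using this
  obtain ⟨Q, hQ⟩ := hdvd
  rw [hQ, mul_comm, coeff_mul_X_pow']
  simp [Nat.not_le.mpr hk]

/-- For every nonzero real polynomial, `v(P) + c(P) ≤ deg(P) - z⁰(P)`,
where `z⁰(P)` is the multiplicity of `0` as a root of `P`. -/
theorem v_add_c_le (P : Polynomial ℝ) (hP : P ≠ 0) :
    (v P + c P : ℤ) ≤ (P.natDegree : ℤ) - P.rootMultiplicity 0 := by
  set n := P.natDegree with hn
  set m := P.rootMultiplicity 0 with hm
  set l : List ℝ := List.ofFn (fun i : Fin (n + 1) => P.coeff i) with hl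
  have hlen : l.length = n + 1 := by simp [hl]
  have hne : l ≠ [] := by
    intro h; rw [h] at hlen; simp at hlen
  have hlast : l.getLast? ≠ some 0 := by
    have h1 : l.getLast? = some (P.coeff n) := by
      rw [hl, List.getLast?_eq_getElem?]
      simp only [List.length_ofFn, Nat.add_sub_cancel]
      rw [List.getElem?_eq_getElem (by simp)]
      simp only [List.getElem_ofFn]
    rw [h1]
    simp only [ne_eq, Option.some.injEq]
    exact Polynomial.leadingCoeff_ne_zero.mpr hP
  have hv : v P = signChanges l := rfl
  have hc : c P = signChanges (alt l) := by
    rw [c, v, hl, alt_ofFn]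
    simp only [natDegree_comp_neg_X, ← hn]
    refine congrArg signChanges (congrArg List.ofFn ?_)
    funext i
    exact coeff_comp_neg_X P i
  have hkey := key (n + 1) l (le_of_eq hlen) hne hlast
  have hmn : m ≤ n := by
    have hdvd : (X : ℝ[X]) ^ m ∣ P := by
      have := P.pow_rootMultiplicity_dvd 0
      simpa [hm] using this
    have := Polynomial.natDegree_le_of_dvd hdvd hP
    simpa using this
  have htw : m ≤ (l.takeWhile (fun x => decide (x = 0))).length := by
    apply tw_ge
    intro k hk
    have hk' : k < n + 1 := by omega
    rw [hl, List.getD_eq_getElem _ _ (by simp [hk'])]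
    simp only [List.getElem_ofFn]
    exact coeff_lt_rootMult P k (by simpa [hm] using hk)
  rw [hv, hc] at *
  rw [hlen] at hkey
  omega
end

section
/- Multiplication lemma for alternations (Descartes's strategy): for every nonzero real polynomial Q and every real α > 0, the polynomial (X − α)·Q(X) has strictly more sign alternations than Q; that is, v((X − α)·Q) ≥ v(Q) + 1. -/
open Polynomial

/-! Weighting the coefficients of `R = (X - α) Q` by `α ^ i` does not change their signs, and
`α ^ i R_i = g i - g (i + 1)` with `g i = α ^ i Q_{i-1}`. So the suffix sums of the weighted
coefficients of `R` are the weighted coefficients of `X Q`, which have the signs of those of `Q`.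
Passing to suffix sums never creates sign changes; when the total sum is `0`, as here, the first
nonzero term and the first nonzero suffix sum have opposite signs, and one sign change is lost. -/
noncomputable def firstNonzero (l : List ℝ) : ℝ := (l.filter fun x => decide (x ≠ 0)).headD 0

lemma firstNonzero_cons (x : ℝ) (l : List ℝ) :
    firstNonzero (x :: l) = if x = 0 then firstNonzero l else x := by
  by_cases hx : x = 0 <;> simp [firstNonzero, hx]

lemma firstNonzero_eq_zero_iff {l : List ℝ} : firstNonzero l = 0 ↔ ∀ x ∈ l, x = 0 := by
  induction l with
  | nil => simp [firstNonzero]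
  | cons x l ih => by_cases hx : x = 0 <;> simp [firstNonzero_cons, hx, ih]

lemma signChanges_cons (x : ℝ) (l : List ℝ) :
    signChanges (x :: l) = signChanges l + if x * firstNonzero l < 0 then 1 else 0 := by
  by_cases hx : x = 0
  · simp [signChanges, hx]
  · simp only [signChanges, firstNonzero, List.filter_cons, hx, ne_eq, not_false_eq_true,
      decide_true, if_true]
    have key : ∀ l' : List ℝ, ((x :: l').zip l').countP (fun p => decide (p.1 * p.2 < 0)) =
        (l'.zip l'.tail).countP (fun p => decide (p.1 * p.2 < 0)) +
          if x * l'.headD 0 < 0 then 1 else 0 := by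
      rintro (_ | ⟨y, l'⟩) <;> simp [List.countP_cons, add_comm]
    exact key _

lemma mul_neg_or_mul_neg_of_mul_neg {x y z : ℝ} (hy : y ≠ 0) (h : x * z < 0) :
    x * y < 0 ∨ y * z < 0 := by
  by_contra! hc
  nlinarith [mul_nonneg hc.1 hc.2, mul_self_pos.2 hy]

lemma firstNonzero_scanr_add_of_sum_eq_zero {l : List ℝ} (hl : l.sum = 0) :
    firstNonzero (l.scanr (· + ·) 0) = -firstNonzero l := by
  induction l with
  | nil => simp [firstNonzero]
  | cons x t ih =>
    rw [List.sum_cons] at hl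
    rw [List.scanr_cons, List.foldr_cons, ← List.sum_eq_foldr, hl, firstNonzero_cons,
      if_pos rfl, firstNonzero_cons]
    by_cases hx : x = 0
    · simp [hx, ih (by linarith)]
    · cases t with
      | nil => simp_all
      | cons y t =>
        rw [List.scanr_cons, List.foldr_cons, ← List.sum_eq_foldr, firstNonzero_cons]
        simp [hx, show y + t.sum = -x by simpa using (by linarith : (y :: t).sum = -x)]

/-- The inductive step of `signChanges_scanr_add_le` for the list `x :: t`, with
`σ = t.sum`, `p = firstNonzero t` and `q = firstNonzero (t.scanr (· + ·) 0)`. -/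
lemma sign_change_indicators_le (x σ p q : ℝ) (hp : p = 0 → σ = 0 ∧ q = 0)
    (hq : σ ≠ 0 → q = σ) :
    ((if (x + σ) * q < 0 then 1 else 0) +
      if (if x = 0 then p else x) * (if x + σ = 0 then q else x + σ) < 0 then 1 else 0 : ℕ) ≤
    (if x * p < 0 then 1 else 0) + if p * q < 0 then 1 else 0 := by
  by_cases hx : x = 0
  · subst hx
    by_cases hσ : σ = 0
    · simp [hσ]
    · simp [hσ, hq hσ, mul_self_nonneg]
  rcases eq_or_ne p 0 with hp0 | hp0
  · obtain ⟨rfl, rfl⟩ := hp hp0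
    simp [hx, hp0, mul_self_nonneg]
  have tri : ∀ z, x * z < 0 → x * p < 0 ∨ p * z < 0 := fun _ =>
    mul_neg_or_mul_neg_of_mul_neg hp0
  by_cases hσ : σ = 0
  · subst hσ
    have := tri q
    simp only [add_zero, hx, if_false, mul_self_nonneg, not_lt.2]
    split_ifs <;> simp_all
  · rw [hq hσ]
    by_cases hS : x + σ = 0
    · have := tri σ
      simp only [hS, hx, if_true, if_false, zero_mul, lt_irrefl]
      split_ifs <;> simp_all
    · simp only [hS, hx, if_false]
      rcases lt_or_ge (x * σ) 0 with hxσ | hxσ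
      · rcases tri σ hxσ with h | h <;> split_ifs <;>
          first | omega | nlinarith [sq_nonneg x, sq_nonneg σ]
      · split_ifs <;> first | omega | nlinarith [sq_nonneg x, sq_nonneg σ]

theorem signChanges_scanr_add_le (l : List ℝ) :
    signChanges (l.scanr (· + ·) 0) +
      (if firstNonzero l * firstNonzero (l.scanr (· + ·) 0) < 0 then 1 else 0) ≤
      signChanges l := by
  induction l with
  | nil => simp [signChanges, firstNonzero]
  | cons x t ih =>
    obtain ⟨S, hS⟩ : ∃ S, t.scanr (· + ·) 0 = t.sum :: S := by
      cases t <;> simp [List.sum_eq_foldr]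
    have hp : firstNonzero t = 0 → t.sum = 0 ∧ firstNonzero (t.scanr (· + ·) 0) = 0 := by
      intro h
      have hsum : t.sum = 0 := List.sum_eq_zero (firstNonzero_eq_zero_iff.1 h)
      exact ⟨hsum, by rw [firstNonzero_scanr_add_of_sum_eq_zero hsum, h, neg_zero]⟩
    have hq : t.sum ≠ 0 → firstNonzero (t.scanr (· + ·) 0) = t.sum := by
      intro h
      rw [hS, firstNonzero_cons, if_neg h]
    rw [List.scanr_cons, List.foldr_cons, ← List.sum_eq_foldr, signChanges_cons,
      signChanges_cons x, firstNonzero_cons x, firstNonzero_cons (x + _)]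
    have := sign_change_indicators_le x t.sum _ _ hp hq
    omega

theorem signChanges_scanr_add_lt (l : List ℝ) (hsum : l.sum = 0) (hl : ∃ x ∈ l, x ≠ 0) :
    signChanges (l.scanr (· + ·) 0) < signChanges l := by
  have hlead : firstNonzero l ≠ 0 := by
    simpa [firstNonzero_eq_zero_iff] using hl
  have h := signChanges_scanr_add_le l
  simp only [firstNonzero_scanr_add_of_sum_eq_zero hsum, mul_neg, neg_lt_zero,
    mul_self_pos.2 hlead, if_true] at h
  omega

section Scaling

variable {ι : Type*} (c f : ι → ℝ)

lemma exists_pos_firstNonzero_map_mul (hc : ∀ i, 0 < c i) (L : List ι) :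
    ∃ d, 0 < d ∧ firstNonzero (L.map fun i => c i * f i) = d * firstNonzero (L.map f) := by
  induction L with
  | nil => exact ⟨1, one_pos, by simp [firstNonzero]⟩
  | cons i L ih =>
    by_cases hf : f i = 0
    · simpa [firstNonzero_cons, hf] using ih
    · exact ⟨c i, hc i, by simp [firstNonzero_cons, hf, (hc i).ne']⟩

lemma signChanges_map_mul (hc : ∀ i, 0 < c i) (L : List ι) :
    signChanges (L.map fun i => c i * f i) = signChanges (L.map f) := by
  induction L with
  | nil => rfl
  | cons i L ih =>
    obtain ⟨d, hd, hL⟩ := exists_pos_firstNonzero_map_mul c f hc L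
    have hcd : 0 < c i * d := mul_pos (hc i) hd
    have hsign :
        c i * f i * (d * firstNonzero (L.map f)) < 0 ↔ f i * firstNonzero (L.map f) < 0 := by
      rw [mul_mul_mul_comm, ← mul_zero (c i * d), mul_lt_mul_iff_right₀ hcd, mul_zero]
    rw [List.map_cons, List.map_cons, signChanges_cons, signChanges_cons, ih, hL,
      if_congr hsign rfl rfl]

end Scaling

lemma sum_map_sub_range' (g : ℕ → ℝ) (k N : ℕ) :
    ((List.range' k N).map fun i => g i - g (i + 1)).sum = g k - g (k + N) := by
  induction N generalizing k with
  | zero => simp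
  | succ N ih =>
    rw [List.range'_succ, List.map_cons, List.sum_cons, ih]
    ring_nf

lemma scanr_add_map_sub_range' (g : ℕ → ℝ) (k N : ℕ) :
    ((List.range' k N).map fun i => g i - g (i + 1)).scanr (· + ·) 0 =
      (List.range' k (N + 1)).map fun i => g i - g (k + N) := by
  induction N generalizing k with
  | zero => simp
  | succ N ih =>
    rw [List.range'_succ, List.map_cons, List.scanr_cons, ← List.sum_eq_foldr, List.sum_cons,
      sum_map_sub_range', ih, List.range'_succ (n := N + 1), List.map_cons]
    congr 1
    · ring_nf
    · simp only [Nat.add_right_comm k 1 N, Nat.add_assoc]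

lemma signChanges_append_of_forall_eq_zero (l m : List ℝ) (hm : ∀ x ∈ m, x = 0) :
    signChanges (l ++ m) = signChanges l := by
  have : m.filter (fun x => decide (x ≠ 0)) = [] := List.filter_eq_nil_iff.2 (by simpa using hm)
  simp only [signChanges, List.filter_append, this, List.append_nil]

lemma v_eq_signChanges_map_range (P : ℝ[X]) {N : ℕ} (hN : P.natDegree < N) :
    v P = signChanges ((List.range N).map P.coeff) := by
  obtain ⟨k, rfl⟩ := Nat.exists_eq_add_of_lt hN
  rw [Nat.add_right_comm, List.range_add, List.map_append, signChanges_append_of_forall_eq_zero]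
  · unfold v
    congr 1
    exact List.ext_getElem (by simp) fun i _ _ => by simp only [List.getElem_ofFn,
      List.getElem_map, List.getElem_range]
  · simp only [List.map_map, List.mem_map, List.mem_range, Function.comp_apply]
    rintro _ ⟨i, -, rfl⟩
    exact coeff_eq_zero_of_natDegree_lt (by omega)

lemma v_X_mul (P : ℝ[X]) : v (X * P) = v P := by
  have hdeg : (X * P).natDegree < P.natDegree + 2 := by
    have := natDegree_mul_le (p := X) (q := P)
    rw [natDegree_X] at this
    omega
  rw [v_eq_signChanges_map_range _ hdeg, v_eq_signChanges_map_range P (Nat.lt_succ_self _),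
    List.range_succ_eq_map, List.map_cons, List.map_map, coeff_X_mul_zero, signChanges_cons,
    zero_mul, if_neg (lt_irrefl 0), add_zero]
  congr 2
  funext i
  simp [coeff_X_mul]

/-- Multiplication lemma for alternations (Descartes's strategy): for `α > 0`,
multiplying a nonzero polynomial `Q` by `X - α` strictly increases the number
of sign alternations: `v((X - α)·Q) ≥ v(Q) + 1`. -/
theorem v_mul_X_sub_C (Q : Polynomial ℝ) (hQ : Q ≠ 0) (α : ℝ) (hα : 0 < α) :
    v Q + 1 ≤ v ((Polynomial.X - Polynomial.C α) * Q) := by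
  set n := Q.natDegree
  set g : ℕ → ℝ := fun i => α ^ i * (X * Q).coeff i
  set w := (List.range' 0 (n + 2)).map fun i => g i - g (i + 1)
  have hg : g (n + 2) = 0 := by
    simp [g, coeff_X_mul, coeff_eq_zero_of_natDegree_lt (Nat.lt_succ_self n)]
  have hvR : v ((X - C α) * Q) = signChanges w := by
    have hdeg : ((X - C α) * Q).natDegree < n + 2 := by
      rw [natDegree_mul (X_sub_C_ne_zero α) hQ, natDegree_X_sub_C]; omega
    rw [v_eq_signChanges_map_range _ hdeg,
      ← signChanges_map_mul (α ^ ·) _ (fun i => pow_pos hα i), List.range_eq_range']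
    congr 2
    funext i
    simp only [g, sub_mul, coeff_sub, coeff_C_mul, coeff_X_mul, pow_succ]
    ring
  have hvQ : v Q = signChanges (w.scanr (· + ·) 0) := by
    rw [scanr_add_map_sub_range', zero_add, hg]
    simp only [sub_zero, g]
    rw [signChanges_map_mul (α ^ ·) _ (fun i => pow_pos hα i), ← List.range_eq_range',
      ← v_eq_signChanges_map_range _ (by rw [natDegree_X_mul hQ]; omega), v_X_mul]
  have hsum : w.sum = 0 := by rw [sum_map_sub_range', zero_add, hg, sub_eq_zero]; simp [g]
  have hw : ∃ x ∈ w, x ≠ 0 := by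
    refine ⟨g (n + 1) - g (n + 2), List.mem_map.2 ⟨n + 1, by simp, rfl⟩, ?_⟩
    have hlead : Q.coeff n ≠ 0 := leadingCoeff_ne_zero.2 hQ
    simp [g, hg, coeff_X_mul, hα.ne', hlead]
  rw [hvQ, hvR]
  exact signChanges_scanr_add_lt w hsum hw
end

section
/- Fourier's rule (positive part): for every nonzero real polynomial P, the number of positive real roots of P counted with multiplicity has the same parity as the number of sign alternations of P; that is, z⁺(P) ≡ v(P) (mod 2). -/
open Polynomial

/-!
Both `z⁺(P)` and `v(P)` have the parity of the indicator of `a * b < 0`, where `a` and `b` are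
the lowest and the highest nonzero coefficients of `P`; we compare `(-1) ^ _` with `sign (a * b)`.

For `v(P)`: along the chain `a = c₀, c₁, …, cₖ = b` of nonzero coefficients, the signs of the
consecutive products `cᵢ cᵢ₊₁` multiply to `sign (a * b)`, since every inner `cᵢ` occurs twice.

For `z⁺(P)`: write `P = ∏ (X - r) * q` over the real roots `r`, with `q` root-free. By the
intermediate value theorem `q` has the sign of its leading coefficient everywhere, in particular
at `0`, so the lowest and highest coefficients of `q` agree in sign. Among the factors `X - r`,
exactly those with `r > 0` have a negative lowest coefficient.
-/

theorem neg_one_pow_countP_zip_tail_eq_sign :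
    ∀ {l : List ℝ} {a b : ℝ}, (∀ x ∈ l, x ≠ 0) → l.head? = some a → l.getLast? = some b →
      (-1 : SignType) ^ (l.zip l.tail).countP (fun p => p.1 * p.2 < 0) = SignType.sign (a * b)
  | [], _, _, _, ha, _ => by simp at ha
  | [x], a, b, hl, ha, hb => by
    obtain rfl : x = a := by simpa using ha
    obtain rfl : x = b := by simpa using hb
    simp [sign_pos (mul_self_pos.2 (hl x (by simp)))]
  | x :: y :: t, a, b, hl, ha, hb => by
    obtain rfl : x = a := by simpa using ha
    have hx : x ≠ 0 := hl x (by simp)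
    have hy : y ≠ 0 := hl y (by simp)
    have ih := neg_one_pow_countP_zip_tail_eq_sign (l := y :: t) (a := y) (b := b)
      (fun z hz => hl z (List.mem_cons_of_mem _ hz)) rfl (by simpa using hb)
    have hxy : (-1 : SignType) ^ (if x * y < 0 then 1 else 0) = SignType.sign (x * y) := by
      rcases (mul_ne_zero hx hy).lt_or_gt with h | h <;> simp [h, h.not_gt, sign_neg, sign_pos]
    simp only [List.tail_cons, List.zip_cons_cons, List.countP_cons, decide_eq_true_eq] at ih ⊢
    calc (-1 : SignType) ^ (((y :: t).zip t).countP (fun p => p.1 * p.2 < 0) +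
            if x * y < 0 then 1 else 0)
        = SignType.sign (y * b) * SignType.sign (x * y) := by rw [pow_add, ih, hxy]
      _ = SignType.sign (x * b * (y * y)) := by rw [← sign_mul]; congr 1; ring
      _ = SignType.sign (x * b) := by rw [sign_mul, sign_pos (mul_self_pos.2 hy), mul_one]

theorem neg_one_pow_signChanges {l : List ℝ} {a b : ℝ}
    (ha : (l.filter (· ≠ 0)).head? = some a) (hb : (l.filter (· ≠ 0)).getLast? = some b) :
    (-1 : SignType) ^ signChanges l = SignType.sign (a * b) :=
  neg_one_pow_countP_zip_tail_eq_sign (fun _ hx => by simpa using (List.mem_filter.1 hx).2) ha hb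

namespace Polynomial

section

variable {P : ℝ[X]}

theorem head?_filter_ne_zero_ofFn_coeff (hP : P ≠ 0) :
    ((List.ofFn fun i : Fin (P.natDegree + 1) => P.coeff i).filter (· ≠ 0)).head? =
      some P.trailingCoeff := by
  rw [List.head?_filter, List.find?_eq_some_iff_getElem]
  refine ⟨by simpa using trailingCoeff_nonzero_iff_nonzero.2 hP, P.natTrailingDegree,
    by simpa using P.natTrailingDegree_le_natDegree, List.getElem_ofFn .., fun j hj => ?_⟩
  simp only [List.getElem_ofFn, coeff_eq_zero_of_lt_natTrailingDegree hj]
  simp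

theorem getLast?_filter_ne_zero_ofFn_coeff (hP : P ≠ 0) :
    ((List.ofFn fun i : Fin (P.natDegree + 1) => P.coeff i).filter (· ≠ 0)).getLast? =
      some P.leadingCoeff := by
  rw [List.ofFn_succ_last, List.filter_append, List.getLast?_append]
  simp [hP]

end

theorem eval_mul_leadingCoeff_pos {q : ℝ[X]} (hq : ∀ y, q.eval y ≠ 0) (x : ℝ) :
    0 < q.eval x * q.leadingCoeff := by
  rcases le_or_gt q.degree 0 with hdeg | hdeg
  · rw [eq_C_of_degree_le_zero hdeg] at hq ⊢
    simpa using hq 0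
  -- `C lc * q` has positive leading coefficient `lc²`, so it is eventually positive.
  set f := C q.leadingCoeff * q
  have hf : ∀ y, f.eval y = q.eval y * q.leadingCoeff := fun y => by simp [f, mul_comm]
  have hlc : q.leadingCoeff ≠ 0 := leadingCoeff_ne_zero.2 fun h => hq 0 (by simp [h])
  have hf_top : Filter.Tendsto (fun y => f.eval y) Filter.atTop Filter.atTop :=
    tendsto_atTop_of_leadingCoeff_nonneg f (by rwa [degree_C_mul hlc])
      (by simpa [f] using mul_self_nonneg q.leadingCoeff)
  obtain ⟨M, hM⟩ := (hf_top.eventually_gt_atTop 0).exists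
  by_contra! hx
  obtain ⟨y, hy⟩ := intermediate_value_univ x M f.continuous ⟨(hf x).trans_le hx, hM.le⟩
  exact hq y (by simpa [hlc, hf] using hy)

theorem sign_trailingCoeff_X_sub_C (r : ℝ) :
    SignType.sign (X - C r).trailingCoeff = if 0 < r then -1 else 1 := by
  rcases eq_or_ne r 0 with rfl | hr
  · simp [trailingCoeff]
  rw [trailingCoeff_eq_coeff_zero (by simpa using hr)]
  rcases hr.lt_or_gt with hr | hr <;> simp [hr, hr.not_gt, sign_neg, sign_pos]

theorem sign_trailingCoeff_prod_X_sub_C (s : Multiset ℝ) :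
    SignType.sign (s.map fun r => X - C r).prod.trailingCoeff =
      (-1) ^ (s.filter (0 < ·)).card := by
  induction s using Multiset.induction_on with
  | empty => simp [trailingCoeff]
  | cons r s ih =>
    rw [Multiset.map_cons, Multiset.prod_cons, trailingCoeff_mul, sign_mul, ih,
      sign_trailingCoeff_X_sub_C, Multiset.filter_cons]
    split_ifs <;> simp [pow_succ, mul_comm]

end Polynomial

theorem neg_one_pow_v {P : ℝ[X]} (hP : P ≠ 0) :
    (-1 : SignType) ^ v P = SignType.sign (P.trailingCoeff * P.leadingCoeff) :=
  neg_one_pow_signChanges (head?_filter_ne_zero_ofFn_coeff hP)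
    (getLast?_filter_ne_zero_ofFn_coeff hP)

theorem neg_one_pow_zpos {P : ℝ[X]} (hP : P ≠ 0) :
    (-1 : SignType) ^ zpos P = SignType.sign (P.trailingCoeff * P.leadingCoeff) := by
  obtain ⟨q, hPq, -, hq⟩ := exists_prod_multiset_X_sub_C_mul P
  have hq0 : q ≠ 0 := by rintro rfl; simp [hP.symm] at hPq
  have hq_eval : ∀ y, q.eval y ≠ 0 := fun y hy => by
    simpa [hq] using (mem_roots hq0).2 hy
  have hmonic : (P.roots.map fun r => X - C r).prod.Monic :=
    monic_multiset_prod_of_monic _ _ fun r _ => monic_X_sub_C r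
  conv_rhs => rw [← hPq, trailingCoeff_mul, leadingCoeff_mul, hmonic.leadingCoeff, one_mul,
    mul_assoc, sign_mul, sign_trailingCoeff_prod_X_sub_C,
    trailingCoeff_eq_coeff_zero (by simpa [coeff_zero_eq_eval_zero] using hq_eval 0),
    coeff_zero_eq_eval_zero, sign_pos (eval_mul_leadingCoeff_pos hq_eval 0), mul_one]
  rfl

theorem Nat.mod_two_eq_of_neg_one_pow_eq {R : Type*} [Monoid R] [HasDistribNeg R]
    (h1 : (-1 : R) ≠ 1) {m n : ℕ} (h : (-1 : R) ^ m = (-1) ^ n) : m % 2 = n % 2 := by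
  have hm := neg_one_pow_eq_one_iff_even (n := m) h1
  rw [h, neg_one_pow_eq_one_iff_even h1, Nat.even_iff, Nat.even_iff] at hm
  omega

/-- Fourier's rule (positive part): `z⁺(P) ≡ v(P) (mod 2)`. -/
theorem fourier_rule_pos (P : Polynomial ℝ) (hP : P ≠ 0) :
    zpos P % 2 = v P % 2 :=
  Nat.mod_two_eq_of_neg_one_pow_eq (by decide)
    ((neg_one_pow_zpos hP).trans (neg_one_pow_v hP).symm)
end

section
/- Fourier's rule (negative part): for every nonzero real polynomial P, the number of negative real roots of P counted with multiplicity has the same parity as the number of sign permanences of P; that is, z⁻(P) ≡ c(P) (mod 2). -/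
open Polynomial

/-! The rule is the parity half of Descartes' rule applied to `P(-X)`. For a nonzero real
polynomial `Q`, both the number `v(Q)` of sign changes and the number `z⁺(Q)` of positive roots
are even exactly when the lowest and highest nonzero coefficients of `Q` have the same sign.
For `v(Q)` this holds because each sign change of the coefficient sequence flips the sign once.
For `z⁺(Q)`, factor `Q = ∏ (X - r) * q` with `q` root-free: a factor `X - r` contributes the
sign `-r`, which is negative exactly when `r` is a positive root, and `q` has the sign of its
leading coefficient on all of `ℝ`, in particular at `0`. -/

def SignParity (n : ℕ) (x : ℝ) : Prop :=
  0 < (-1 : ℝ) ^ n * x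

namespace SignParity

variable {m n : ℕ} {x y : ℝ}

theorem mul (hx : SignParity m x) (hy : SignParity n y) : SignParity (m + n) (x * y) := by
  unfold SignParity at *
  calc 0 < (-1) ^ m * x * ((-1) ^ n * y) := mul_pos hx hy
    _ = (-1) ^ (m + n) * (x * y) := by ring

theorem of_mul_mul_self (hy : y ≠ 0) (h : SignParity n (x * (y * y))) : SignParity n x :=
  (mul_pos_iff_of_pos_right (mul_self_pos.2 hy)).1 (by unfold SignParity at h; linarith)

theorem of_ne_zero (hx : x ≠ 0) : SignParity (if x < 0 then 1 else 0) x := by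
  unfold SignParity
  split_ifs with h
  · linarith
  · simpa using lt_of_le_of_ne (not_lt.1 h) hx.symm

theorem mod_two_eq (hm : SignParity m x) (hn : SignParity n x) : m % 2 = n % 2 := by
  have hsq : 0 < (-1 : ℝ) ^ (m + n) * (x * x) := hm.mul hn
  have heven : Even (m + n) := by
    by_contra hodd
    rw [Nat.not_even_iff_odd.1 hodd |>.neg_one_pow] at hsq
    nlinarith [mul_self_nonneg x]
  have := Nat.even_add.1 heven
  rw [Nat.even_iff, Nat.even_iff] at this
  omega

end SignParity

theorem signParity_countP_zip_tail (a : ℝ) (t : List ℝ) (h : ∀ x ∈ a :: t, x ≠ 0) :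
    SignParity (((a :: t).zip t).countP fun p => p.1 * p.2 < 0)
      (a * (a :: t).getLast (List.cons_ne_nil a t)) := by
  induction t generalizing a with
  | nil => exact (mul_self_pos.2 (h a (by simp))).trans_eq (by simp)
  | cons b t ih =>
    have hb : b ≠ 0 := h b (by simp)
    have hbt := ih b (fun x hx => h x (List.mem_cons_of_mem a hx))
    have hab := SignParity.of_ne_zero (mul_ne_zero (h a (by simp)) hb)
    rw [List.zip_cons_cons, List.countP_cons, List.getLast_cons (List.cons_ne_nil b t)]
    -- `(b * L) * (a * b) = (a * L) * b ^ 2`, where `L` is the last entry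
    refine SignParity.of_mul_mul_self hb ?_
    convert hbt.mul hab using 1
    · simp
    · ring

theorem signParity_signChanges {l : List ℝ} {a b : ℝ}
    (ha : (l.filter (· ≠ 0)).head? = some a) (hb : (l.filter (· ≠ 0)).getLast? = some b) :
    SignParity (signChanges l) (a * b) := by
  have hne : ∀ x ∈ l.filter (· ≠ 0), x ≠ 0 := fun x hx => by simpa using (List.mem_filter.1 hx).2
  unfold signChanges
  generalize l.filter (· ≠ 0) = l' at hne ha hb ⊢
  obtain _ | ⟨a', t⟩ := l'
  · simp at ha
  obtain rfl : a' = a := by simpa using ha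
  obtain rfl : (a' :: t).getLast (List.cons_ne_nil a' t) = b := by
    simpa [List.getLast?_eq_some_getLast (List.cons_ne_nil a' t)] using hb
  exact signParity_countP_zip_tail a' t hne

section FilterOfFn

variable {α : Type*} [Zero α] [DecidableEq α]

theorem head?_filter_ne_zero_ofFn {n k : ℕ} {f : ℕ → α} (hk : k < n)
    (hzero : ∀ j < k, f j = 0) (hfk : f k ≠ 0) :
    ((List.ofFn fun i : Fin n => f i).filter (· ≠ 0)).head? = some (f k) := by
  induction n generalizing k f with
  | zero => omega
  | succ n ih =>
    rw [List.ofFn_succ, List.filter_cons]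
    cases k with
    | zero => simp [hfk]
    | succ k =>
      have := ih (f := fun j => f (j + 1)) (by omega) (fun j hj => hzero (j + 1) (by omega)) hfk
      simpa [hzero 0 (Nat.succ_pos k)] using this

theorem getLast?_filter_ne_zero_ofFn {n : ℕ} {f : ℕ → α} (hfn : f n ≠ 0) :
    ((List.ofFn fun i : Fin (n + 1) => f i).filter (· ≠ 0)).getLast? = some (f n) := by
  rw [List.ofFn_succ_last, List.filter_append, List.getLast?_append]
  simp [hfn]

end FilterOfFn

theorem signParity_v {P : ℝ[X]} (hP : P ≠ 0) :
    SignParity (v P) (P.trailingCoeff * P.leadingCoeff) :=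
  signParity_signChanges
    (head?_filter_ne_zero_ofFn (Nat.lt_succ_of_le P.natTrailingDegree_le_natDegree)
      (fun _ hj => coeff_eq_zero_of_lt_natTrailingDegree hj)
      (coeff_natTrailingDegree_ne_zero.2 hP))
    (getLast?_filter_ne_zero_ofFn (leadingCoeff_ne_zero.2 hP))

theorem Continuous.mul_pos_of_forall_ne_zero {f : ℝ → ℝ} (hf : Continuous f)
    (h : ∀ x, f x ≠ 0) (x y : ℝ) : 0 < f x * f y := by
  by_contra! hxy
  have hmem : (0 : ℝ) ∈ Set.uIcc (f x) (f y) := by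
    rcases mul_nonpos_iff.1 hxy with ⟨h1, h2⟩ | ⟨h1, h2⟩
    · exact Set.mem_uIcc.2 (Or.inr ⟨h2, h1⟩)
    · exact Set.mem_uIcc.2 (Or.inl ⟨h1, h2⟩)
  obtain ⟨z, -, hz⟩ := intermediate_value_uIcc hf.continuousOn hmem
  exact h z hz

namespace Polynomial

theorem exists_leadingCoeff_mul_eval_pos {Q : ℝ[X]} (hQ : 0 < Q.degree) :
    ∃ x, 0 < Q.leadingCoeff * Q.eval x := by
  have hlc : Q.leadingCoeff ≠ 0 := leadingCoeff_ne_zero.2 (ne_zero_of_degree_gt hQ)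
  have htends := tendsto_atTop_of_leadingCoeff_nonneg (C Q.leadingCoeff * Q)
    (by rwa [degree_C_mul hlc]) (by simpa using mul_self_nonneg Q.leadingCoeff)
  simpa using (htends.eventually_gt_atTop 0).exists

theorem leadingCoeff_mul_eval_pos_of_forall_not_isRoot {Q : ℝ[X]} (h : ∀ x, ¬Q.IsRoot x)
    (x : ℝ) : 0 < Q.leadingCoeff * Q.eval x := by
  rcases le_or_gt Q.degree 0 with hdeg | hdeg
  · obtain ⟨a, rfl⟩ : ∃ a, Q = C a := ⟨_, eq_C_of_degree_le_zero hdeg⟩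
    simpa [mul_self_pos] using h x
  obtain ⟨y, hy⟩ := exists_leadingCoeff_mul_eval_pos hdeg
  have hxy := Q.continuous.mul_pos_of_forall_ne_zero h x y
  refine (mul_pos_iff_of_pos_right (mul_self_pos.2 (h y))).1 ?_
  calc 0 < Q.leadingCoeff * Q.eval y * (Q.eval x * Q.eval y) := mul_pos hy hxy
    _ = _ := by ring

end Polynomial

theorem zpos_mul {P Q : ℝ[X]} (hP : P ≠ 0) (hQ : Q ≠ 0) : zpos (P * Q) = zpos P + zpos Q := by
  rw [zpos, roots_mul (mul_ne_zero hP hQ), Multiset.filter_add, Multiset.card_add, zpos, zpos]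

theorem zneg_eq_zpos_comp_neg_X (P : ℝ[X]) : zneg P = zpos (P.comp (-X)) := by
  rw [zneg, zpos, roots_comp_neg_X, Multiset.filter_map, Multiset.card_map]
  exact congrArg _ (Multiset.filter_congr fun x _ => by simp)

theorem signParity_zpos_mul {P Q : ℝ[X]} (hP : P ≠ 0) (hQ : Q ≠ 0)
    (hPs : SignParity (zpos P) (P.trailingCoeff * P.leadingCoeff))
    (hQs : SignParity (zpos Q) (Q.trailingCoeff * Q.leadingCoeff)) :
    SignParity (zpos (P * Q)) ((P * Q).trailingCoeff * (P * Q).leadingCoeff) := by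
  rw [zpos_mul hP hQ, trailingCoeff_mul, leadingCoeff_mul]
  convert hPs.mul hQs using 1
  ring

theorem signParity_zpos_X_sub_C (r : ℝ) :
    SignParity (zpos (X - C r)) ((X - C r).trailingCoeff * (X - C r).leadingCoeff) := by
  have hz : zpos (X - C r) = if -r < 0 then 1 else 0 := by
    simp [zpos, roots_X_sub_C, Multiset.filter_singleton, apply_ite]
  rw [hz, leadingCoeff_X_sub_C, mul_one]
  rcases eq_or_ne r 0 with rfl | hr
  · simp [SignParity, trailingCoeff]
  · rw [trailingCoeff_eq_coeff_zero (by simpa using hr)]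
    simpa using SignParity.of_ne_zero (neg_ne_zero.2 hr)

theorem signParity_zpos_prod_X_sub_C (s : Multiset ℝ) :
    SignParity (zpos (s.map fun r => X - C r).prod)
      ((s.map fun r => X - C r).prod.trailingCoeff * (s.map fun r => X - C r).prod.leadingCoeff) := by
  induction s using Multiset.induction_on with
  | empty => simp [SignParity, zpos, trailingCoeff]
  | cons r s ih =>
    rw [Multiset.map_cons, Multiset.prod_cons]
    exact signParity_zpos_mul (X_sub_C_ne_zero r) (monic_multiset_prod_of_monic _ _
      fun r _ => monic_X_sub_C r).ne_zero (signParity_zpos_X_sub_C r) ih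

theorem signParity_zpos_of_roots_eq_zero {Q : ℝ[X]} (hQ : Q ≠ 0) (hroots : Q.roots = 0) :
    SignParity (zpos Q) (Q.trailingCoeff * Q.leadingCoeff) := by
  have hnot : ∀ x, ¬Q.IsRoot x := fun x hx => by simpa [hroots] using (mem_roots hQ).2 hx
  rw [SignParity, zpos, hroots, Multiset.filter_zero, Multiset.card_zero, pow_zero, one_mul,
    trailingCoeff_eq_coeff_zero (by simpa [coeff_zero_eq_eval_zero] using hnot 0),
    coeff_zero_eq_eval_zero, mul_comm]
  exact leadingCoeff_mul_eval_pos_of_forall_not_isRoot hnot 0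

theorem signParity_zpos {P : ℝ[X]} (hP : P ≠ 0) :
    SignParity (zpos P) (P.trailingCoeff * P.leadingCoeff) := by
  obtain ⟨q, hq, -, hroots⟩ := P.exists_prod_multiset_X_sub_C_mul
  have hq0 : q ≠ 0 := by
    rintro rfl
    exact hP (by simpa using hq.symm)
  rw [← hq]
  exact signParity_zpos_mul
    (monic_multiset_prod_of_monic _ _ fun r _ => monic_X_sub_C r).ne_zero hq0
    (signParity_zpos_prod_X_sub_C P.roots) (signParity_zpos_of_roots_eq_zero hq0 hroots)

/-- Fourier's rule (negative part): `z⁻(P) ≡ c(P) (mod 2)`. -/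
theorem fourier_rule_neg (P : Polynomial ℝ) (hP : P ≠ 0) :
    zneg P % 2 = c P % 2 := by
  rw [zneg_eq_zpos_comp_neg_X]
  have hQ : P.comp (-X) ≠ 0 := comp_neg_X_eq_zero_iff.not.2 hP
  exact (signParity_zpos hQ).mod_two_eq (signParity_v hQ)
end

section
/- De Gua's rule: let P = Σ aₖXᵏ be a real polynomial and let i > j be indices with aᵢ ≠ 0, aⱼ ≠ 0 and aₖ = 0 for all k with j < k < i, and set r := i − j − 1 ≥ 1 (a block of r consecutive missing terms). Then the number of non-real complex roots of P, counted with multiplicity, is at least r if r is even; at least r + 1 if r is odd and aᵢ·aⱼ > 0; and at least r − 1 if r is odd and aᵢ·aⱼ < 0. -/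
/-!
Let `Q = P⁽ʲ⁾`. By Rolle, differentiation does not increase the deficit `deg − #(real roots)`,
which for `P` is exactly the number of non-real roots; so it suffices to bound the deficit of `Q`.
Up to positive factors the coefficients of `Q` start `aⱼ, 0, …, 0, aᵢ`, so `Q(0) ≠ 0` and
`Q' = Xʳ R` with `R(0)` a positive multiple of `aᵢ`. Rolle on each half-line gives at most one
more root of `Q` than of `Q'` there, and `Q'` also has the `r`-fold root `0`: the deficit is at
least `r − 1`. The extra root on `(0, ∞)` disappears when `Q(0) R(0) > 0`: then `|Q|` grows to
the right of `0`, so a critical point precedes the first positive root. Likewise on `(−∞, 0)`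
when `(−1)ʳ Q(0) R(0) < 0`. For even `r` exactly one of the two conditions holds; for odd `r`
both hold if `aᵢ aⱼ > 0`.
-/

open Polynomial

open Set

theorem Multiset.card_le_card_add_of_count_le_succ {α : Type*} [DecidableEq α]
    {A B : Multiset α} {b : ℕ} (hcount : ∀ x, A.count x ≤ B.count x + 1)
    (hsupp : A.toFinset.card ≤ (B.toFinset \ A.toFinset).card + b) :
    card A ≤ card B + b :=
  calc card A = ∑ x ∈ A.toFinset, A.count x := (toFinset_sum_count_eq A).symm
    _ ≤ ∑ x ∈ A.toFinset, B.count x + A.toFinset.card := by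
      rw [Finset.card_eq_sum_ones, ← Finset.sum_add_distrib]
      exact Finset.sum_le_sum fun x _ => hcount x
    _ ≤ ∑ x ∈ A.toFinset, B.count x + (∑ x ∈ B.toFinset \ A.toFinset, B.count x + b) := by
      grw [hsupp, Finset.card_eq_sum_ones]
      gcongr with x hx
      exact count_pos.2 (mem_toFinset.1 (Finset.mem_sdiff.1 hx).1)
    _ = card B + b := by
      rw [← add_assoc, ← Finset.sum_union Finset.disjoint_sdiff, Finset.union_sdiff_self_eq_union,
        sum_count_eq_card fun x hx => Finset.mem_union_right _ (mem_toFinset.2 hx)]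

theorem Multiset.card_eq_card_filter_gt_add_card_filter_lt_add_count {α : Type*} [LinearOrder α]
    (m : Multiset α) (a : α) :
    card m = card (m.filter (a < ·)) + card (m.filter (· < a)) + m.count a := by
  induction m using Multiset.induction_on with
  | empty => simp
  | cons b m ih =>
    rcases lt_trichotomy a b with hab | rfl | hab
    · simp [hab, hab.not_gt, count_cons_of_ne hab.ne]
      omega
    · simp
      omega
    · simp [hab, hab.not_gt, count_cons_of_ne hab.ne']
      omega

namespace Polynomial

theorem card_roots_add_card_filter_im_ne_zero (P : ℝ[X]) :
    Multiset.card P.roots +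
        Multiset.card ((P.map (algebraMap ℝ ℂ)).roots.filter (fun z => z.im ≠ 0)) =
      P.natDegree := by
  classical
  have hreal : (P.map (algebraMap ℝ ℂ)).roots.filter (fun z => ¬z.im ≠ 0) =
      P.roots.map (algebraMap ℝ ℂ) := by
    rw [← filter_roots_map_range_eq_map_roots (algebraMap ℝ ℂ).injective]
    refine Multiset.filter_congr fun z _ => ?_
    simp [Complex.ext_iff, eq_comm]
  have hsplit := congrArg Multiset.card
    (Multiset.filter_add_not (fun z : ℂ => z.im ≠ 0) (P.map (algebraMap ℝ ℂ)).roots)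
  rw [Multiset.card_add, hreal, Multiset.card_map,
    IsAlgClosed.card_roots_map_eq_natDegree_of_injective P (algebraMap ℝ ℂ).injective] at hsplit
  omega

theorem card_roots_le_card_roots_iterate_derivative_add (p : ℝ[X]) (m : ℕ) :
    Multiset.card p.roots ≤ Multiset.card (derivative^[m] p).roots + m := by
  induction m with
  | zero => simp
  | succ m ih =>
    rw [Function.iterate_succ_apply']
    linarith [card_roots_le_derivative (derivative^[m] p)]

theorem natDegree_sub_card_roots_iterate_derivative_le (p : ℝ[X]) (m : ℕ) :
    (derivative^[m] p).natDegree - Multiset.card (derivative^[m] p).roots ≤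
      p.natDegree - Multiset.card p.roots := by
  have := natDegree_iterate_derivative p m
  have := card_roots_le_card_roots_iterate_derivative_add p m
  have := card_roots' p
  omega

theorem exists_mem_Ioo_isRoot_derivative (p : ℝ[X]) {x y : ℝ} (hxy : x < y) (hx : p.IsRoot x)
    (hy : p.IsRoot y) : ∃ z ∈ Ioo x y, (derivative p).IsRoot z := by
  obtain ⟨z, hz, hz'⟩ := exists_deriv_eq_zero hxy p.continuousOn (hx.trans hy.symm)
  exact ⟨z, hz, by rwa [IsRoot, ← p.deriv]⟩

theorem count_filter_roots_le_derivative {R : Type*} [CommRing R] [IsDomain R] [CharZero R]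
    [DecidableEq R] (p : R[X]) (q : R → Prop) [DecidablePred q] (x : R) :
    (p.roots.filter q).count x ≤ ((derivative p).roots.filter q).count x + 1 := by
  simp only [Multiset.count_filter, count_roots]
  split_ifs
  · have := rootMultiplicity_sub_one_le_derivative_rootMultiplicity p x
    omega
  · simp

section RootsInOrdConnected

variable (p : ℝ[X]) {q : ℝ → Prop} [DecidablePred q]

theorem card_filter_roots_le_derivative (hq : {x | q x}.OrdConnected) :
    Multiset.card (p.roots.filter q) ≤ Multiset.card ((derivative p).roots.filter q) + 1 := by
  rcases eq_or_ne (derivative p) 0 with hp' | hp'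
  · rw [eq_C_of_derivative_eq_zero hp']
    simp
  have hp : p ≠ 0 := ne_of_apply_ne derivative (by rwa [derivative_zero])
  refine Multiset.card_le_card_add_of_count_le_succ (count_filter_roots_le_derivative p q)
    (Finset.card_le_sdiff_of_interleaved fun x hx y hy hxy _ => ?_)
  simp only [Multiset.mem_toFinset, Multiset.mem_filter, mem_roots hp, mem_roots hp'] at hx hy ⊢
  obtain ⟨z, hz, hz'⟩ := p.exists_mem_Ioo_isRoot_derivative hxy hx.1 hy.1
  exact ⟨z, ⟨hz', hq.out hx.2 hy.2 (Ioo_subset_Icc_self hz)⟩, hz⟩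

/-- In the interleaving argument `a` acts as one more root of `p`, which absorbs the `+ 1`. -/
theorem card_filter_roots_le_derivative_of_forall_exists (hq : {x | q x}.OrdConnected) (a : ℝ)
    (ha : ¬q a) (h : ∀ y, q y → p.IsRoot y → ∃ z ∈ uIoo a y, q z ∧ (derivative p).IsRoot z) :
    Multiset.card (p.roots.filter q) ≤ Multiset.card ((derivative p).roots.filter q) := by
  rcases eq_or_ne (derivative p) 0 with hp' | hp'
  · rw [eq_C_of_derivative_eq_zero hp']
    simp
  have hp : p ≠ 0 := ne_of_apply_ne derivative (by rwa [derivative_zero])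
  set s := (p.roots.filter q).toFinset
  set t := ((derivative p).roots.filter q).toFinset
  have hmem {u : ℝ[X]} (hu : u ≠ 0) (x : ℝ) :
      x ∈ (u.roots.filter q).toFinset ↔ u.IsRoot x ∧ q x := by
    rw [Multiset.mem_toFinset, Multiset.mem_filter, mem_roots hu]
  have has : a ∉ s := fun has => ha ((hmem hp a).1 has).2
  have hinsert : (insert a s).card ≤ (t \ insert a s).card + 1 := by
    refine Finset.card_le_sdiff_of_interleaved fun x hx y hy hxy _ => ?_
    rcases Finset.mem_insert.1 hx with rfl | hxs <;> rcases Finset.mem_insert.1 hy with rfl | hys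
    · exact absurd hxy (lt_irrefl _)
    · obtain ⟨hy, hqy⟩ := (hmem hp y).1 hys
      obtain ⟨z, hz, hqz, hz'⟩ := h y hqy hy
      rw [uIoo_of_lt hxy] at hz
      exact ⟨z, (hmem hp' z).2 ⟨hz', hqz⟩, hz⟩
    · obtain ⟨hx, hqx⟩ := (hmem hp x).1 hxs
      obtain ⟨z, hz, hqz, hz'⟩ := h x hqx hx
      rw [uIoo_of_gt hxy] at hz
      exact ⟨z, (hmem hp' z).2 ⟨hz', hqz⟩, hz⟩
    · obtain ⟨hx, hqx⟩ := (hmem hp x).1 hxs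
      obtain ⟨hy, hqy⟩ := (hmem hp y).1 hys
      obtain ⟨z, hz, hz'⟩ := p.exists_mem_Ioo_isRoot_derivative hxy hx hy
      exact ⟨z, (hmem hp' z).2 ⟨hz', hq.out hqx hqy (Ioo_subset_Icc_self hz)⟩, hz⟩
  refine Multiset.card_le_card_add_of_count_le_succ (b := 0)
    (count_filter_roots_le_derivative p q) ?_
  change s.card ≤ (t \ s).card + 0
  rw [Finset.card_insert_of_notMem has] at hinsert
  have : (t \ insert a s).card ≤ (t \ s).card :=
    Finset.card_le_card (Finset.sdiff_subset_sdiff le_rfl (Finset.subset_insert a s))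
  omega

end RootsInOrdConnected

theorem exists_derivative_eq_X_pow_mul {A : Type*} [CommSemiring A] (Q : A[X]) (r : ℕ)
    (h : ∀ k, 0 < k → k ≤ r → Q.coeff k = 0) :
    ∃ R : A[X], derivative Q = X ^ r * R ∧ R.eval 0 = Q.coeff (r + 1) * (r + 1) := by
  obtain ⟨R, hR⟩ : X ^ r ∣ derivative Q := X_pow_dvd_iff.2 fun d hd => by
    rw [coeff_derivative, h (d + 1) d.succ_pos hd, zero_mul]
  refine ⟨R, hR, ?_⟩
  rw [← coeff_zero_eq_eval_zero, ← coeff_derivative, hR, coeff_X_pow_mul', if_pos le_rfl,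
    Nat.sub_self]

section CriticalPointNearZero

variable {Q R : ℝ[X]} {r : ℕ} (h : derivative Q = X ^ r * R)
include h

/-- By the mean value theorem `Q(0) R(ξ) < 0` for some `ξ ∈ (0, y)`, while `Q(0) R(0) > 0`;
so `R`, and with it `Q'`, vanishes in `(0, ξ)`. -/
theorem exists_mem_Ioo_isRoot_derivative_of_pos (hs : 0 < Q.eval 0 * R.eval 0) {y : ℝ}
    (hy : 0 < y) (hQy : Q.IsRoot y) : ∃ z ∈ Ioo 0 y, (derivative Q).IsRoot z := by
  have hQ0 : Q.eval 0 ≠ 0 := left_ne_zero_of_mul hs.ne'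
  obtain ⟨ξ, hξ, hslope⟩ :=
    exists_deriv_eq_slope (Q.eval ·) hy Q.continuousOn Q.differentiableOn
  rw [Q.deriv, h, hQy.eq_zero, eval_mul, eval_pow, eval_X] at hslope
  have hRξ : Q.eval 0 * R.eval ξ < 0 := by
    have hξr : 0 < ξ ^ r := pow_pos hξ.1 r
    have : ξ ^ r * (Q.eval 0 * R.eval ξ) = -Q.eval 0 ^ 2 / y := by
      rw [mul_left_comm, hslope]; ring
    have : -Q.eval 0 ^ 2 / y < 0 := div_neg_of_neg_of_pos (by nlinarith [sq_pos_of_ne_zero hQ0]) hy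
    nlinarith
  obtain ⟨z, hz, hRz⟩ := intermediate_value_Ioo' hξ.1.le
    (continuous_const.mul R.continuous).continuousOn ⟨hRξ, hs⟩
  refine ⟨z, ⟨hz.1, hz.2.trans hξ.2⟩, ?_⟩
  simp [IsRoot, h, (mul_eq_zero.1 hRz).resolve_left hQ0]

theorem exists_mem_Ioo_isRoot_derivative_of_neg (hs : (-1) ^ r * (Q.eval 0 * R.eval 0) < 0)
    {y : ℝ} (hy : y < 0) (hQy : Q.IsRoot y) : ∃ z ∈ Ioo y 0, (derivative Q).IsRoot z := by
  have hQ0 : Q.eval 0 ≠ 0 := left_ne_zero_of_mul (right_ne_zero_of_mul hs.ne)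
  obtain ⟨ξ, hξ, hslope⟩ :=
    exists_deriv_eq_slope (Q.eval ·) hy Q.continuousOn Q.differentiableOn
  rw [Q.deriv, h, hQy.eq_zero, eval_mul, eval_pow, eval_X] at hslope
  have hRξ : 0 < (-1) ^ r * (Q.eval 0 * R.eval ξ) := by
    have hξr : 0 < (-ξ) ^ r := pow_pos (neg_pos.2 hξ.2) r
    have : (-ξ) ^ r * ((-1) ^ r * (Q.eval 0 * R.eval ξ)) = Q.eval 0 ^ 2 / -y := by
      rw [← mul_assoc, ← mul_pow, neg_mul_neg, mul_one, mul_left_comm, hslope]; ring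
    have : 0 < Q.eval 0 ^ 2 / -y := div_pos (by positivity) (neg_pos.2 hy)
    nlinarith
  obtain ⟨z, hz, hRz⟩ := intermediate_value_Ioo' hξ.2.le
    (continuous_const.mul (continuous_const.mul R.continuous)).continuousOn ⟨hs, hRξ⟩
  refine ⟨z, ⟨hξ.1.trans hz.1, hz.2⟩, ?_⟩
  have : R.eval z = 0 := by simpa [hQ0] using hRz
  simp [IsRoot, h, this]

theorem card_filter_pos_roots_le_derivative :
    Multiset.card (Q.roots.filter (0 < ·)) ≤ Multiset.card ((derivative Q).roots.filter (0 < ·)) +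
      if 0 < Q.eval 0 * R.eval 0 then 0 else 1 := by
  split_ifs with hs
  · refine Q.card_filter_roots_le_derivative_of_forall_exists ordConnected_Ioi 0 (lt_irrefl 0)
      fun y hy hQy => ?_
    obtain ⟨z, hz, hz'⟩ := exists_mem_Ioo_isRoot_derivative_of_pos h hs hy hQy
    exact ⟨z, by rwa [uIoo_of_lt hy], hz.1, hz'⟩
  · exact Q.card_filter_roots_le_derivative ordConnected_Ioi

theorem card_filter_neg_roots_le_derivative :
    Multiset.card (Q.roots.filter (· < 0)) ≤ Multiset.card ((derivative Q).roots.filter (· < 0)) +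
      if (-1) ^ r * (Q.eval 0 * R.eval 0) < 0 then 0 else 1 := by
  split_ifs with hs
  · refine Q.card_filter_roots_le_derivative_of_forall_exists ordConnected_Iio 0 (lt_irrefl 0)
      fun y hy hQy => ?_
    obtain ⟨z, hz, hz'⟩ := exists_mem_Ioo_isRoot_derivative_of_neg h hs hy hQy
    exact ⟨z, by rwa [uIoo_of_gt hy], hz.2, hz'⟩
  · exact Q.card_filter_roots_le_derivative ordConnected_Iio

theorem card_roots_add_le_of_derivative_eq_X_pow_mul (hQ0 : Q.eval 0 ≠ 0) (hR0 : R.eval 0 ≠ 0) :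
    Multiset.card Q.roots + r + 1 ≤ Q.natDegree + (if 0 < Q.eval 0 * R.eval 0 then 0 else 1) +
      (if (-1) ^ r * (Q.eval 0 * R.eval 0) < 0 then 0 else 1) := by
  have hQ' : derivative Q ≠ 0 := by
    rw [h]
    exact mul_ne_zero (pow_ne_zero r X_ne_zero) fun hR => hR0 (by simp [hR])
  have hQ0root : Q.roots.count 0 = 0 := by
    rw [count_roots, rootMultiplicity_eq_zero hQ0]
  have hQ'0root : r ≤ (derivative Q).roots.count 0 := by
    rw [count_roots, le_rootMultiplicity_iff hQ', map_zero, sub_zero, h]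
    exact dvd_mul_right _ _
  have hdeg : Multiset.card (derivative Q).roots < Q.natDegree :=
    (card_roots' _).trans_lt (natDegree_derivative_lt (derivative_ne_zero.1 hQ'))
  have := Q.roots.card_eq_card_filter_gt_add_card_filter_lt_add_count 0
  have := (derivative Q).roots.card_eq_card_filter_gt_add_card_filter_lt_add_count 0
  have := card_filter_pos_roots_le_derivative h
  have := card_filter_neg_roots_le_derivative h
  omega

end CriticalPointNearZero

theorem card_roots_add_le_of_coeff_gap (P : ℝ[X]) {j r : ℕ} (hi : P.coeff (j + r + 1) ≠ 0)
    (hj : P.coeff j ≠ 0) (hgap : ∀ k, j < k → k < j + r + 1 → P.coeff k = 0) :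
    Multiset.card P.roots + r + 1 ≤ P.natDegree +
      (if 0 < P.coeff (j + r + 1) * P.coeff j then 0 else 1) +
      (if (-1) ^ r * (P.coeff (j + r + 1) * P.coeff j) < 0 then 0 else 1) := by
  obtain ⟨Q, hQdef⟩ : ∃ Q, Q = derivative^[j] P := ⟨_, rfl⟩
  have hQ (m : ℕ) : Q.coeff m = ((m + j).descFactorial j : ℝ) * P.coeff (m + j) := by
    rw [hQdef, coeff_iterate_derivative, nsmul_eq_mul]
  have hd (m : ℕ) : (0 : ℝ) < (m + j).descFactorial j := by
    exact_mod_cast Nat.descFactorial_pos.2 (Nat.le_add_left j m)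
  have hQ0 : Q.coeff 0 ≠ 0 := by
    rw [hQ]
    exact mul_ne_zero (hd 0).ne' (by rwa [zero_add])
  have hQr : Q.coeff (r + 1) ≠ 0 := by
    rw [hQ]
    exact mul_ne_zero (hd _).ne' (by rwa [show r + 1 + j = j + r + 1 by ring])
  obtain ⟨R, hQR, hR0⟩ := exists_derivative_eq_X_pow_mul Q r fun k hk hkr => by
    rw [hQ, hgap _ (by omega) (by omega), mul_zero]
  obtain ⟨c, hc, hs⟩ : ∃ c : ℝ, 0 < c ∧
      Q.eval 0 * R.eval 0 = c * (P.coeff (j + r + 1) * P.coeff j) := by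
    refine ⟨_, mul_pos (mul_pos (hd 0) (hd (r + 1))) r.cast_add_one_pos, ?_⟩
    rw [← coeff_zero_eq_eval_zero, hR0, hQ, hQ, zero_add, show r + 1 + j = j + r + 1 by ring]
    ring
  have hpos : 0 < Q.eval 0 * R.eval 0 ↔ 0 < P.coeff (j + r + 1) * P.coeff j := by
    rw [hs, mul_pos_iff_of_pos_left hc]
  have hneg : (-1) ^ r * (Q.eval 0 * R.eval 0) < 0 ↔
      (-1) ^ r * (P.coeff (j + r + 1) * P.coeff j) < 0 := by
    rw [hs, mul_left_comm, ← smul_eq_mul c, smul_neg_iff_of_pos_left hc]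
  have hbound := card_roots_add_le_of_derivative_eq_X_pow_mul hQR
    (by rwa [← coeff_zero_eq_eval_zero]) (by rw [hR0]; exact mul_ne_zero hQr r.cast_add_one_ne_zero)
  simp only [hpos, hneg] at hbound
  have := hQdef ▸ natDegree_sub_card_roots_iterate_derivative_le P j
  have := card_roots' Q
  have := card_roots' P
  omega

end Polynomial

theorem de_gua_rule_general (P : Polynomial ℝ) (i j : ℕ) (hij : j < i)
    (hi : P.coeff i ≠ 0) (hj : P.coeff j ≠ 0)
    (hmiss : ∀ k : ℕ, j < k → k < i → P.coeff k = 0)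
    (r : ℕ) (hr : r = i - j - 1) :
    (Even r → r ≤ ((P.map (algebraMap ℝ ℂ)).roots.filter (fun z => z.im ≠ 0)).card) ∧
    (Odd r → 0 < P.coeff i * P.coeff j →
      r + 1 ≤ ((P.map (algebraMap ℝ ℂ)).roots.filter (fun z => z.im ≠ 0)).card) ∧
    (Odd r → P.coeff i * P.coeff j < 0 →
      r - 1 ≤ ((P.map (algebraMap ℝ ℂ)).roots.filter (fun z => z.im ≠ 0)).card) := by
  obtain rfl : i = j + r + 1 := by omega
  have hbound := card_roots_add_le_of_coeff_gap P hi hj hmiss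
  have := card_roots_add_card_filter_im_ne_zero P
  refine ⟨fun he => ?_, fun ho hσ => ?_, fun _ _ => by split_ifs at hbound <;> omega⟩
  · rw [he.neg_one_pow, one_mul] at hbound
    rcases (mul_ne_zero hi hj).lt_or_gt with hσ | hσ <;>
      simp only [hσ, hσ.not_gt, if_true, if_false] at hbound <;> omega
  · simp only [ho.neg_one_pow, neg_one_mul, neg_lt_zero, hσ, if_true] at hbound
    omega

/-- De Gua's rule: if a real polynomial `P` has a block of `r ≥ 1` consecutive missing
terms between nonzero coefficients `a_i` and `a_j` (`i > j`, `r = i - j - 1`), then `P`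
has at least `r` non-real complex roots (with multiplicity) if `r` is even; at least
`r + 1` if `r` is odd and `a_i·a_j > 0`; and at least `r - 1` if `r` is odd and
`a_i·a_j < 0`. -/
theorem de_gua_rule (P : Polynomial ℝ) (i j : ℕ) (hij : j < i)
    (hi : P.coeff i ≠ 0) (hj : P.coeff j ≠ 0)
    (hmiss : ∀ k : ℕ, j < k → k < i → P.coeff k = 0)
    (r : ℕ) (hr : r = i - j - 1) (hr1 : 1 ≤ r) :
    (Even r → r ≤ ((P.map (algebraMap ℝ ℂ)).roots.filter (fun z => z.im ≠ 0)).card) ∧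
    (Odd r → 0 < P.coeff i * P.coeff j →
      r + 1 ≤ ((P.map (algebraMap ℝ ℂ)).roots.filter (fun z => z.im ≠ 0)).card) ∧
    (Odd r → P.coeff i * P.coeff j < 0 →
      r - 1 ≤ ((P.map (algebraMap ℝ ℂ)).roots.filter (fun z => z.im ≠ 0)).card) :=
  de_gua_rule_general P i j hij hi hj hmiss r hr
end

section
/- Finiteness of zeros: for every n ≥ 0 and every function f : [a, b] → ℝ that is n times differentiable on [a, b] (one-sidedly at the endpoints) and whose n-th derivative f⁽ⁿ⁾ never vanishes on [a, b], the set of zeros of f in [a, b] is finite. -/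
/-! By Rolle's theorem, between any two zeros of `g` on an interval there is a zero of `g'`, so
`g` has at most one more zero than `g'`. Descending from `f⁽ⁿ⁾`, which has no zeros, every
`f⁽ⁱ⁾` with `i ≤ n` has finitely many zeros. -/

open Set

/-- `v(f, t, n)`: number of sign changes in the sequence `(f(t), f'(t), …, f⁽ⁿ⁾(t))`
after deleting its zero entries, where the derivatives are taken within the set `s`
(one-sidedly at its endpoints). -/
noncomputable def vF (n : ℕ) (f : ℝ → ℝ) (s : Set ℝ) (t : ℝ) : ℕ :=
  signChanges (List.ofFn fun i : Fin (n + 1) => iteratedDerivWithin (i : ℕ) f s t)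

namespace Set.OrdConnected

variable {s : Set ℝ} {g : ℝ → ℝ}

theorem exists_derivWithin_eq_zero (hs : s.OrdConnected) (hg : DifferentiableOn ℝ g s)
    {x y : ℝ} (hx : x ∈ s) (hy : y ∈ s) (hxy : x < y) (hgxy : g x = g y) :
    ∃ z ∈ Ioo x y, derivWithin g s z = 0 := by
  have hIcc : Icc x y ⊆ s := hs.out hx hy
  obtain ⟨z, hz, hz0⟩ := exists_deriv_eq_zero hxy ((hg.mono hIcc).continuousOn) hgxy
  have hs_nhds : s ∈ nhds z :=
    Filter.mem_of_superset (Ioo_mem_nhds hz.1 hz.2) (Ioo_subset_Icc_self.trans hIcc)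
  exact ⟨z, hz, by rwa [derivWithin_of_mem_nhds hs_nhds]⟩

theorem card_le_card_zeros_derivWithin_add_one (hs : s.OrdConnected)
    (hg : DifferentiableOn ℝ g s) {S T : Finset ℝ} (hS : ↑S ⊆ {x ∈ s | g x = 0})
    (hT : {x ∈ s | derivWithin g s x = 0} ⊆ ↑T) : S.card ≤ T.card + 1 := by
  refine Finset.card_le_of_interleaved fun x hx y hy hxy _ => ?_
  obtain ⟨hxs, hgx⟩ := hS hx
  obtain ⟨hys, hgy⟩ := hS hy
  obtain ⟨z, hz, hz0⟩ := hs.exists_derivWithin_eq_zero hg hxs hys hxy (hgx.trans hgy.symm)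
  exact ⟨z, hT ⟨hs.out hxs hys (Ioo_subset_Icc_self hz), hz0⟩, hz⟩

theorem finite_zeros_of_finite_zeros_derivWithin (hs : s.OrdConnected)
    (hg : DifferentiableOn ℝ g s) (h' : {x ∈ s | derivWithin g s x = 0}.Finite) :
    {x ∈ s | g x = 0}.Finite := by
  by_contra hinf
  obtain ⟨S, hS, hcard⟩ := Set.Infinite.exists_subset_card_eq hinf (h'.toFinset.card + 2)
  have := hs.card_le_card_zeros_derivWithin_add_one hg hS h'.coe_toFinset.ge
  omega

end Set.OrdConnected

theorem finite_zeros_general (f : ℝ → ℝ) (a b : ℝ) (n : ℕ)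
    (hdiff : ∀ i < n, ∀ x ∈ Set.Icc a b,
      DifferentiableWithinAt ℝ (iteratedDerivWithin i f (Set.Icc a b)) (Set.Icc a b) x)
    (hne : ∀ x ∈ Set.Icc a b, iteratedDerivWithin n f (Set.Icc a b) x ≠ 0) :
    {x ∈ Set.Icc a b | f x = 0}.Finite := by
  have hzeros : ∀ i ≤ n, {x ∈ Icc a b | iteratedDerivWithin i f (Icc a b) x = 0}.Finite := by
    intro i hi
    induction hi using Nat.decreasingInduction with
    | self => exact Set.finite_empty.subset fun x hx => hne x hx.1 hx.2
    | of_succ i hi ih =>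
      rw [iteratedDerivWithin_succ] at ih
      exact ordConnected_Icc.finite_zeros_of_finite_zeros_derivWithin (hdiff i hi) ih
  simpa using hzeros 0 n.zero_le

/-- Finiteness of zeros: if `f` is `n` times differentiable on `[a, b]` (one-sidedly at
the endpoints) and its `n`-th derivative never vanishes on `[a, b]`, then the set of
zeros of `f` in `[a, b]` is finite. -/
theorem finite_zeros (f : ℝ → ℝ) (a b : ℝ) (hab : a ≤ b) (n : ℕ)
    (hdiff : ∀ i < n, ∀ x ∈ Set.Icc a b,
      DifferentiableWithinAt ℝ (iteratedDerivWithin i f (Set.Icc a b)) (Set.Icc a b) x)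
    (hne : ∀ x ∈ Set.Icc a b, iteratedDerivWithin n f (Set.Icc a b) x ≠ 0) :
    {x ∈ Set.Icc a b | f x = 0}.Finite :=
  finite_zeros_general f a b n hdiff hne
end

section
/- Local behavior at a zero (Claim 2): let f : [a, b] → ℝ be n times differentiable on [a, b] with f⁽ⁿ⁾ never vanishing and of constant sign on [a, b], and let α ∈ [a, b] be a zero of f of multiplicity μ (so μ < n). Then there exists η > 0 such that for all u, v ∈ [a, b] with α − η < u < α ≤ v < α + η, the sum of multiplicities of the zeros of f in [u, v] equals μ and v(f, u, n) ≥ v(f, v, n) + μ. -/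
/-!
Near `α`, a derivative `f⁽ⁱ⁾` with `f⁽ⁱ⁾(α) ≠ 0` keeps the sign of `f⁽ⁱ⁾(α)`, while if
`f⁽ⁱ⁾(α) = 0` the mean value theorem gives `f⁽ⁱ⁾(x) = f⁽ⁱ⁺¹⁾(ξ) (x - α)` with `ξ` between `α`
and `x`. Descending from the sign-definite `f⁽ⁿ⁾`, every derivative therefore has constant sign
on each side of `α` (so `α` is the only zero of `f` nearby), and at a zero entry of the sequence
at `α` the neighbours `f⁽ⁱ⁾(x), f⁽ⁱ⁺¹⁾(x)` agree in sign for `x > α` and disagree for `x < α`.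
To the right of `α` the sign changes are thus those of the sequence at `α`; to the left each of
the `μ` leading zeros adds one.
-/

lemma mul_pos_of_mul_pos_of_mul_pos {a b c : ℝ} (hab : 0 < a * b) (hbc : 0 < b * c) :
    0 < a * c := by
  have h : 0 < (a * c) * (b * b) := by linarith [mul_pos hab hbc]
  exact (pos_iff_pos_of_mul_pos h).2 (mul_self_pos.2 (right_ne_zero_of_mul hab.ne'))

lemma mul_neg_iff_of_mul_pos {a b x y : ℝ} (hx : 0 < a * x) (hy : 0 < b * y) :
    a * b < 0 ↔ x * y < 0 := by
  rcases mul_pos_iff.1 hx with ⟨ha, hx⟩ | ⟨ha, hx⟩ <;>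
    rcases mul_pos_iff.1 hy with ⟨hb, hy⟩ | ⟨hb, hy⟩ <;>
    constructor <;> intro h <;> nlinarith

noncomputable def adjSignChanges (l : List ℝ) : ℕ :=
  (l.zip l.tail).countP fun p => decide (p.1 * p.2 < 0)

noncomputable def leadingZeros : List ℝ → ℕ
  | [] => 0
  | x :: l => if x = 0 then leadingZeros l + 1 else 0

lemma signChanges_eq_adjSignChanges {l : List ℝ} (h : ∀ x ∈ l, x ≠ 0) :
    signChanges l = adjSignChanges l := by
  change adjSignChanges (l.filter (· ≠ 0)) = _
  rw [List.filter_eq_self.mpr (by simpa using h)]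

lemma filter_ne_zero_cons_zero (l : List ℝ) :
    (0 :: l).filter (· ≠ 0) = l.filter (· ≠ 0) := by
  simp

lemma filter_ne_zero_cons {c : ℝ} (hc : c ≠ 0) (l : List ℝ) :
    (c :: l).filter (· ≠ 0) = c :: l.filter (· ≠ 0) := by
  simp [hc]

lemma adjSignChanges_singleton (x : ℝ) : adjSignChanges [x] = 0 := rfl

lemma adjSignChanges_cons_cons (x y : ℝ) (l : List ℝ) :
    adjSignChanges (x :: y :: l) = adjSignChanges (y :: l) + if x * y < 0 then 1 else 0 := by
  simp only [adjSignChanges, List.tail_cons, List.zip_cons_cons, List.countP_cons]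
  split_ifs <;> simp_all

lemma adjSignChanges_le_cons (x : ℝ) (l : List ℝ) :
    adjSignChanges l ≤ adjSignChanges (x :: l) := by
  cases l with
  | nil => rfl
  | cons y l => rw [adjSignChanges_cons_cons]; omega

lemma adjSignChanges_cons_le (x : ℝ) (l : List ℝ) :
    adjSignChanges (x :: l) ≤ adjSignChanges l + 1 := by
  cases l with
  | nil => simp [adjSignChanges_singleton]
  | cons y l => rw [adjSignChanges_cons_cons]; split <;> omega

lemma le_leadingZeros {μ : ℕ} {l : List ℝ} (h : ∀ i < μ, l[i]? = some 0) :
    μ ≤ leadingZeros l := by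
  induction l generalizing μ with
  | nil => cases μ <;> simp_all
  | cons x l ih =>
    cases μ with
    | zero => exact Nat.zero_le _
    | succ μ =>
      obtain rfl : x = 0 := by simpa using h 0 μ.succ_pos
      simpa [leadingZeros] using ih fun i hi => by simpa using h (i + 1) (by omega)

lemma le_leadingZeros_ofFn {n μ : ℕ} {c : ℕ → ℝ} (hμ : ∀ i < μ, c i = 0) (hn : c n ≠ 0) :
    μ ≤ leadingZeros (List.ofFn fun i : Fin (n + 1) => c i) := by
  have hμn : μ ≤ n := by
    by_contra! hnμ
    exact hn (hμ n hnμ)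
  refine le_leadingZeros fun i hi => ?_
  rw [List.getElem?_ofFn]
  simp [show i < n + 1 by omega, hμ i hi]

/-- `SignPattern ε s l`: `s` lists the derivatives `f, f', …, f⁽ⁿ⁾` at a point `α` and `l` lists
them at a nearby point `x` with `x - α` of the sign of `ε`. A nonzero entry of `s` fixes the sign
of the corresponding entry of `l`; at a zero entry of `s`, the entry of `l` and its successor
have product of the sign of `ε` (by the mean value theorem). -/
inductive SignPattern (ε : ℝ) : List ℝ → List ℝ → Prop
  | single {c x : ℝ} : 0 < c * x → SignPattern ε [c] [x]
  | cons {c x : ℝ} {s l : List ℝ} : 0 < c * x → SignPattern ε s l → SignPattern ε (c :: s) (x :: l)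
  | zero_cons {x y : ℝ} {s l : List ℝ} :
      0 < ε * (x * y) → SignPattern ε s (y :: l) → SignPattern ε (0 :: s) (x :: y :: l)

namespace SignPattern

variable {ε : ℝ} {s l : List ℝ}

lemma ne_nil (h : SignPattern ε s l) : l ≠ [] := by
  cases h <;> simp

lemma ne_zero (h : SignPattern ε s l) : ∀ x ∈ l, x ≠ 0 := by
  induction h with
  | single hcx => simpa using right_ne_zero_of_mul hcx.ne'
  | cons hcx _ ih => simpa [right_ne_zero_of_mul hcx.ne'] using ih
  | zero_cons hxy _ ih =>
    simpa [left_ne_zero_of_mul (right_ne_zero_of_mul hxy.ne')] using ih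

lemma mul_headI_pos {c : ℝ} (h : SignPattern ε (c :: s) l) (hc : c ≠ 0) : 0 < c * l.headI := by
  cases h with
  | single hcx => exact hcx
  | cons hcx _ => exact hcx
  | zero_cons _ _ => exact absurd rfl hc

lemma adjSignChanges_eq (hε : 0 < ε) (h : SignPattern ε s l) :
    adjSignChanges l = adjSignChanges (s.filter (· ≠ 0)) ∧
      0 < (s.filter (· ≠ 0)).headI * l.headI := by
  induction h with
  | single hcx =>
    rw [filter_ne_zero_cons (left_ne_zero_of_mul hcx.ne')]
    exact ⟨rfl, by simpa using hcx⟩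
  | @cons c x s l hcx h ih =>
    obtain ⟨y, l, rfl⟩ := List.exists_cons_of_ne_nil h.ne_nil
    obtain ⟨d, m, hdm⟩ := List.exists_cons_of_ne_nil (l := s.filter (· ≠ 0)) <| by
      rintro h0; rw [h0] at ih; exact ih.2.ne' (zero_mul y)
    rw [hdm] at ih
    simp only [List.headI_cons] at ih ⊢
    rw [filter_ne_zero_cons (left_ne_zero_of_mul hcx.ne'), hdm, adjSignChanges_cons_cons,
      adjSignChanges_cons_cons, ih.1]
    simp only [mul_neg_iff_of_mul_pos hcx ih.2, List.headI_cons, hcx, and_true]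
  | @zero_cons x y s l hxy _ ih =>
    simp only [List.headI_cons] at ih ⊢
    rw [filter_ne_zero_cons_zero, adjSignChanges_cons_cons, ← ih.1, if_neg (by nlinarith)]
    have hxy : 0 < y * x := by rw [mul_comm]; exact (pos_iff_pos_of_mul_pos hxy).1 hε
    exact ⟨rfl, mul_pos_of_mul_pos_of_mul_pos ih.2 hxy⟩

lemma adjSignChanges_add_le (hε : ε < 0) (h : SignPattern ε s l) :
    adjSignChanges (s.filter (· ≠ 0)) + leadingZeros s ≤ adjSignChanges l := by
  induction h with
  | single hcx =>
    rw [filter_ne_zero_cons (left_ne_zero_of_mul hcx.ne')]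
    simp [adjSignChanges_singleton, leadingZeros, left_ne_zero_of_mul hcx.ne']
  | @cons c x s l hcx h ih =>
    have hc : c ≠ 0 := left_ne_zero_of_mul hcx.ne'
    simp only [leadingZeros, if_neg hc, add_zero]
    rw [filter_ne_zero_cons hc]
    obtain ⟨y, l, rfl⟩ := List.exists_cons_of_ne_nil h.ne_nil
    rcases s with _ | ⟨d, s⟩
    · exact (adjSignChanges_singleton c).trans_le (Nat.zero_le _)
    by_cases hd : d = 0
    · calc adjSignChanges (c :: (d :: s).filter (· ≠ 0))
          ≤ adjSignChanges ((d :: s).filter (· ≠ 0)) + leadingZeros (d :: s) := by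
            have : leadingZeros (d :: s) = leadingZeros s + 1 := by simp [leadingZeros, hd]
            linarith [adjSignChanges_cons_le c ((d :: s).filter (· ≠ 0))]
        _ ≤ adjSignChanges (y :: l) := ih
        _ ≤ adjSignChanges (x :: y :: l) := adjSignChanges_le_cons x _
    · have hdy : 0 < d * y := h.mul_headI_pos hd
      simp only [leadingZeros, if_neg hd, add_zero, filter_ne_zero_cons hd] at ih ⊢
      rw [adjSignChanges_cons_cons, adjSignChanges_cons_cons]
      simp only [mul_neg_iff_of_mul_pos hcx hdy]
      omega
  | zero_cons hxy _ ih =>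
    have hxy : _ < (0 : ℝ) := neg_of_mul_pos_right hxy hε.le
    rw [filter_ne_zero_cons_zero, adjSignChanges_cons_cons, if_pos hxy]
    simp only [leadingZeros, if_true]
    omega

lemma ofFn {n : ℕ} {c p : ℕ → ℝ} (hn : 0 < c n * p n)
    (h : ∀ i < n, 0 < c i * p i ∨ (c i = 0 ∧ 0 < ε * (p i * p (i + 1)))) :
    SignPattern ε (List.ofFn fun i : Fin (n + 1) => c i) (List.ofFn fun i : Fin (n + 1) => p i) := by
  induction n generalizing c p with
  | zero => simpa using single hn
  | succ n ih =>
    have tail := ih (c := fun i => c (i + 1)) (p := fun i => p (i + 1)) hn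
      fun i hi => h (i + 1) (by omega)
    simp only [List.ofFn_succ, Fin.val_succ, Fin.val_zero] at tail ⊢
    rcases h 0 n.succ_pos with h0 | ⟨h0, h01⟩
    · exact cons h0 tail
    · rw [h0]
      cases n with
      | zero => exact zero_cons h01 (by simpa using tail)
      | succ n => exact zero_cons h01 tail

lemma signChanges_eq (hε : 0 < ε) (h : SignPattern ε s l) :
    signChanges l = signChanges s := by
  rw [signChanges_eq_adjSignChanges h.ne_zero, (h.adjSignChanges_eq hε).1]
  rfl

lemma signChanges_add_le (hε : ε < 0) (h : SignPattern ε s l) :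
    signChanges s + leadingZeros s ≤ signChanges l := by
  rw [signChanges_eq_adjSignChanges h.ne_zero]
  exact h.adjSignChanges_add_le hε

end SignPattern

open Set Filter Topology

lemma exists_eq_mul_sub_of_hasDerivWithinAt {g g' : ℝ → ℝ} {a b α x : ℝ}
    (hg : ∀ y ∈ Icc a b, HasDerivWithinAt g (g' y) (Icc a b) y) (hα : α ∈ Icc a b)
    (hx : x ∈ Icc a b) (hxα : x ≠ α) :
    ∃ ξ ∈ Icc a b, 0 < (ξ - α) * (x - α) ∧ |ξ - α| < |x - α| ∧ g x - g α = g' ξ * (x - α) := by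
  have mvt : ∀ p ∈ Icc a b, ∀ q ∈ Icc a b, p < q →
      ∃ ξ ∈ Ioo p q, g q - g p = g' ξ * (q - p) := by
    intro p hp q hq hpq
    obtain ⟨ξ, hξ, hslope⟩ := exists_hasDerivAt_eq_slope g g' hpq
      (fun y hy => (hg y (Icc_subset_Icc hp.1 hq.2 hy)).continuousWithinAt.mono
        (Icc_subset_Icc hp.1 hq.2))
      (fun y hy => (hg y ⟨hp.1.trans hy.1.le, hy.2.le.trans hq.2⟩).hasDerivAt
        (Icc_mem_nhds (hp.1.trans_lt hy.1) (hy.2.trans_le hq.2)))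
    exact ⟨ξ, hξ, by rw [hslope, div_mul_cancel₀ _ (sub_pos.2 hpq).ne']⟩
  rcases hxα.lt_or_gt with hlt | hgt
  · obtain ⟨ξ, ⟨hxξ, hξα⟩, hξ⟩ := mvt x hx α hα hlt
    refine ⟨ξ, ⟨hx.1.trans hxξ.le, hξα.le.trans hα.2⟩,
      mul_pos_of_neg_of_neg (by linarith) (by linarith), ?_, by linarith⟩
    rw [abs_of_neg (by linarith), abs_of_neg (by linarith)]
    linarith
  · obtain ⟨ξ, ⟨hαξ, hξx⟩, hξ⟩ := mvt α hα x hx hgt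
    refine ⟨ξ, ⟨hα.1.trans hαξ.le, hξx.le.trans hx.2⟩,
      mul_pos (by linarith) (by linarith), ?_, hξ⟩
    rw [abs_of_pos (by linarith), abs_of_pos (by linarith)]
    linarith

lemma exists_pos_forall_mul_pos {G : ℕ → ℝ → ℝ} {s : Set ℝ} {n : ℕ} {α : ℝ}
    (hG : ∀ i < n, ContinuousWithinAt (G i) s α) :
    ∃ η > 0, ∀ i < n, G i α ≠ 0 → ∀ x ∈ s, |x - α| < η → 0 < G i α * G i x := by
  have : ∀ᶠ x in 𝓝[s] α, ∀ i ∈ Iio n, G i α ≠ 0 → 0 < G i α * G i x := by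
    refine (eventually_all_finite (finite_Iio n)).2 fun i hi => ?_
    by_cases h : G i α = 0
    · exact Eventually.of_forall fun _ h' => absurd h h'
    · exact (((hG i hi).const_mul (G i α)).eventually_const_lt (mul_self_pos.2 h)).mono
        fun _ hx _ => hx
  obtain ⟨η, hη, h⟩ := Metric.eventually_nhds_iff.1 (eventually_nhdsWithin_iff.1 this)
  exact ⟨η, hη, fun i hi hi0 x hx hxη => h (by rwa [Real.dist_eq]) hx i hi hi0⟩

section Chain

variable {G : ℕ → ℝ → ℝ} {n : ℕ} {a b α η : ℝ}
  (hder : ∀ i < n, ∀ y ∈ Icc a b, HasDerivWithinAt (G i) (G (i + 1) y) (Icc a b) y)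
  (hsign : ∀ x ∈ Icc a b, ∀ y ∈ Icc a b, 0 < G n x * G n y)
  (hnear : ∀ i < n, G i α ≠ 0 → ∀ x ∈ Icc a b, |x - α| < η → 0 < G i α * G i x)
  (hα : α ∈ Icc a b)
include hder hsign hnear hα

lemma mul_pos_of_same_side {i : ℕ} (hi : i ≤ n) {x y : ℝ} (hx : x ∈ Icc a b) (hy : y ∈ Icc a b)
    (hxy : 0 < (x - α) * (y - α)) (hxη : |x - α| < η) (hyη : |y - α| < η) :
    0 < G i x * G i y := by
  induction hi using Nat.decreasingInduction generalizing x y with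
  | self => exact hsign x hx y hy
  | of_succ i hi ih =>
    by_cases hGα : G i α = 0
    · obtain ⟨ξ, hξ, hξx, hξη, hGx⟩ := exists_eq_mul_sub_of_hasDerivWithinAt (hder i hi) hα hx
        (sub_ne_zero.1 (left_ne_zero_of_mul hxy.ne'))
      obtain ⟨ζ, hζ, hζy, hζη, hGy⟩ := exists_eq_mul_sub_of_hasDerivWithinAt (hder i hi) hα hy
        (sub_ne_zero.1 (right_ne_zero_of_mul hxy.ne'))
      have hξζ : 0 < (ξ - α) * (ζ - α) := mul_pos_of_mul_pos_of_mul_pos hξx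
        (mul_pos_of_mul_pos_of_mul_pos hxy (by rw [mul_comm]; exact hζy))
      have := ih hξ hζ hξζ (hξη.trans hxη) (hζη.trans hyη)
      rw [hGα, sub_zero] at hGx hGy
      rw [hGx, hGy]
      linarith [mul_pos this hxy]
    · exact mul_pos_of_mul_pos_of_mul_pos (a := G i x) (b := G i α)
        (by rw [mul_comm]; exact hnear i hi hGα x hx hxη) (hnear i hi hGα y hy hyη)

lemma signPattern_near {x : ℝ} (hx : x ∈ Icc a b) (hxα : x ≠ α) (hxη : |x - α| < η) :
    SignPattern (x - α) (List.ofFn fun i : Fin (n + 1) => G i α)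
      (List.ofFn fun i : Fin (n + 1) => G i x) := by
  refine SignPattern.ofFn (c := fun i => G i α) (p := fun i => G i x) (hsign α hα x hx)
    fun i hi => ?_
  by_cases hGα : G i α = 0
  · obtain ⟨ξ, hξ, hξx, hξη, hGx⟩ := exists_eq_mul_sub_of_hasDerivWithinAt (hder i hi) hα hx hxα
    have := mul_pos_of_same_side hder hsign hnear hα hi hξ hx hξx (hξη.trans hxη) hxη
    rw [hGα, sub_zero] at hGx
    refine Or.inr ⟨hGα, ?_⟩
    rw [hGx]
    linarith [mul_pos this (mul_self_pos.2 (sub_ne_zero.2 hxα))]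
  · exact Or.inl (hnear i hi hGα x hx hxη)

end Chain

theorem claim_two_general (f : ℝ → ℝ) (a b : ℝ) (n : ℕ)
    (hdiff : ∀ i < n, ∀ x ∈ Set.Icc a b,
      DifferentiableWithinAt ℝ (iteratedDerivWithin i f (Set.Icc a b)) (Set.Icc a b) x)
    (hne : ∀ x ∈ Set.Icc a b, iteratedDerivWithin n f (Set.Icc a b) x ≠ 0)
    (hsign : (∀ x ∈ Set.Icc a b, 0 < iteratedDerivWithin n f (Set.Icc a b) x) ∨
             (∀ x ∈ Set.Icc a b, iteratedDerivWithin n f (Set.Icc a b) x < 0))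
    (α : ℝ) (hα : α ∈ Set.Icc a b) (hfα : f α = 0) (μ : ℕ)
    (hzero : ∀ i < μ, iteratedDerivWithin i f (Set.Icc a b) α = 0)
    (hmult : iteratedDerivWithin μ f (Set.Icc a b) α ≠ 0) :
    ∃ η > (0 : ℝ), ∀ u ∈ Set.Icc a b, ∀ v ∈ Set.Icc a b,
      α - η < u → u < α → α ≤ v → v < α + η →
      (∃ (Z : Finset ℝ) (m : ℝ → ℕ),
        (∀ x : ℝ, x ∈ Z ↔ x ∈ Set.Icc u v ∧ f x = 0) ∧
        (∀ x ∈ Z, (∀ i < m x, iteratedDerivWithin i f (Set.Icc a b) x = 0) ∧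
          iteratedDerivWithin (m x) f (Set.Icc a b) x ≠ 0) ∧
        ∑ x ∈ Z, m x = μ) ∧
      vF n f (Set.Icc a b) v + μ ≤ vF n f (Set.Icc a b) u := by
  set G : ℕ → ℝ → ℝ := fun i => iteratedDerivWithin i f (Icc a b)
  have hder : ∀ i < n, ∀ y ∈ Icc a b, HasDerivWithinAt (G i) (G (i + 1) y) (Icc a b) y :=
    fun i hi y hy => by
      simpa only [G, iteratedDerivWithin_succ] using (hdiff i hi y hy).hasDerivWithinAt
  have hsign' : ∀ x ∈ Icc a b, ∀ y ∈ Icc a b, 0 < G n x * G n y := by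
    rcases hsign with h | h
    · exact fun x hx y hy => mul_pos (h x hx) (h y hy)
    · exact fun x hx y hy => mul_pos_of_neg_of_neg (h x hx) (h y hy)
  obtain ⟨η, hη, hnear⟩ :=
    exists_pos_forall_mul_pos fun i hi => (hdiff i hi α hα).continuousWithinAt
  refine ⟨η, hη, fun u hu v hv huη huα hαv hvη => ⟨⟨{α}, fun _ => μ, fun x => ?_,
    by simpa using ⟨hzero, hmult⟩, by simp⟩, ?_⟩⟩
  · refine ⟨fun hx => ?_, fun ⟨hx, hfx⟩ => Finset.mem_singleton.2 ?_⟩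
    · rw [Finset.mem_singleton.1 hx]
      exact ⟨⟨huα.le, hαv⟩, hfα⟩
    by_contra hxα
    have hxη : |x - α| < η := abs_sub_lt_iff.2 ⟨by linarith [hx.2], by linarith [hx.1]⟩
    have := mul_pos_of_same_side hder hsign' hnear hα (i := 0) n.zero_le
      (Icc_subset_Icc hu.1 hv.2 hx) (Icc_subset_Icc hu.1 hv.2 hx)
      (mul_self_pos.2 (sub_ne_zero.2 hxα)) hxη hxη
    simp [G, hfx] at this
  have hleft : vF n f (Icc a b) α + μ ≤ vF n f (Icc a b) u :=
    (Nat.add_le_add_left (le_leadingZeros_ofFn (c := fun i => G i α) hzero (hne α hα)) _).trans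
      ((signPattern_near hder hsign' hnear hα hu huα.ne
        (abs_sub_lt_iff.2 ⟨by linarith, by linarith⟩)).signChanges_add_le (sub_neg.2 huα))
  rcases hαv.eq_or_lt with rfl | hαv
  · exact hleft
  · rwa [vF, (signPattern_near hder hsign' hnear hα hv hαv.ne'
      (abs_sub_lt_iff.2 ⟨by linarith, by linarith⟩)).signChanges_eq (sub_pos.2 hαv)]

/-- Local behavior at a zero (Claim 2): if `f` is `n` times differentiable on `[a, b]`
with `f⁽ⁿ⁾` never vanishing and of constant sign, and `α ∈ [a, b]` is a zero of `f` of
multiplicity `μ` (so `μ < n`), then for all `u, v ∈ [a, b]` sufficiently close to `α`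
with `u < α ≤ v`, the sum of multiplicities of the zeros of `f` in `[u, v]` equals `μ`
and `v(f, u, n) ≥ v(f, v, n) + μ`. -/
theorem claim_two (f : ℝ → ℝ) (a b : ℝ) (hab : a ≤ b) (n : ℕ)
    (hdiff : ∀ i < n, ∀ x ∈ Set.Icc a b,
      DifferentiableWithinAt ℝ (iteratedDerivWithin i f (Set.Icc a b)) (Set.Icc a b) x)
    (hne : ∀ x ∈ Set.Icc a b, iteratedDerivWithin n f (Set.Icc a b) x ≠ 0)
    (hsign : (∀ x ∈ Set.Icc a b, 0 < iteratedDerivWithin n f (Set.Icc a b) x) ∨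
             (∀ x ∈ Set.Icc a b, iteratedDerivWithin n f (Set.Icc a b) x < 0))
    (α : ℝ) (hα : α ∈ Set.Icc a b) (hfα : f α = 0) (μ : ℕ) (hμn : μ < n)
    (hzero : ∀ i < μ, iteratedDerivWithin i f (Set.Icc a b) α = 0)
    (hmult : iteratedDerivWithin μ f (Set.Icc a b) α ≠ 0) :
    ∃ η > (0 : ℝ), ∀ u ∈ Set.Icc a b, ∀ v ∈ Set.Icc a b,
      α - η < u → u < α → α ≤ v → v < α + η →
      (∃ (Z : Finset ℝ) (m : ℝ → ℕ),
        (∀ x : ℝ, x ∈ Z ↔ x ∈ Set.Icc u v ∧ f x = 0) ∧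
        (∀ x ∈ Z, (∀ i < m x, iteratedDerivWithin i f (Set.Icc a b) x = 0) ∧
          iteratedDerivWithin (m x) f (Set.Icc a b) x ≠ 0) ∧
        ∑ x ∈ Z, m x = μ) ∧
      vF n f (Set.Icc a b) v + μ ≤ vF n f (Set.Icc a b) u :=
  claim_two_general f a b n hdiff hne hsign α hα hfα μ hzero hmult
end
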